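/- arXiv:math/0512313 — 7 statements merged into one kernel-verified Lean document; each statement's English description precedes it below -/
import Mathlib

section
/- For 1 ≤ p ≤ ∞, if f, h ∈ AC_p, say f(t) = ∫₀ᵗ f'(s) ds and h(t) = ∫₀ᵗ h'(s) ds with f', h' ∈ L^p[0,1], then the pointwise product f·h belongs to AC_p, its derivative is f'h + f h' ∈ L^p[0,1] (a.e.), and |||f h||| = ‖f'h + f h'‖_p ≤ 2 |||f||| · |||h|||. In particular AC_p with the norm |||·||| is a (non-unital) Banach algebra under pointwise operations. -/
open MeasureTheory Set
open scoped ENNReal NNReal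

/-!
Integrating `f'(s) h'(u)` over the square `(0, t]²` by Fubini, once over the triangle `u ≤ s`
and once over its complement, gives the product rule `f h = ∫₀ᵗ (f' h + f h')`. A primitive
of `g'` is bounded by `‖g'‖₁ ≤ ‖g'‖_p`, since `[0,1]` has measure one, so Hölder's inequality
with exponents `(p, ∞)` bounds both `f' h` and `f h'` in `L^p` by `|||f||| |||h|||`.
-/

/-- The Lebesgue measure restricted to `[0,1]`. -/
noncomputable def mu01 : Measure ℝ := volume.restrict (Set.Icc (0 : ℝ) 1)

instance : IsProbabilityMeasure mu01 :=
  ⟨by simp [mu01, Real.volume_Icc]⟩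

section Primitive

variable {E : Type*} [NormedAddCommGroup E] [NormedSpace ℝ E] {g g' : ℝ → E} {a b : ℝ}

theorem aestronglyMeasurable_of_eqOn_primitive (hg' : IntegrableOn g' (Icc a b))
    (hg : ∀ t ∈ Icc a b, g t = ∫ s in Ioc a t, g' s) :
    AEStronglyMeasurable g (volume.restrict (Icc a b)) :=
  ((intervalIntegral.continuousOn_primitive hg').congr hg).aestronglyMeasurable measurableSet_Icc

theorem eLpNorm_top_le_eLpNorm_one_of_eqOn_primitive
    (hg : ∀ t ∈ Icc a b, g t = ∫ s in Ioc a t, g' s) :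
    eLpNorm g ∞ (volume.restrict (Icc a b)) ≤ eLpNorm g' 1 (volume.restrict (Icc a b)) := by
  rw [eLpNorm_exponent_top, eLpNorm_one_eq_lintegral_enorm]
  refine eLpNormEssSup_le_of_ae_enorm_bound ?_
  filter_upwards [ae_restrict_mem measurableSet_Icc] with t ht
  rw [hg t ht]
  exact (enorm_integral_le_lintegral_enorm _).trans
    (lintegral_mono_set (Ioc_subset_Icc_self.trans (Icc_subset_Icc_right ht.2)))

theorem memLp_top_of_eqOn_primitive (hg' : IntegrableOn g' (Icc a b))
    (hg : ∀ t ∈ Icc a b, g t = ∫ s in Ioc a t, g' s) :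
    MemLp g ∞ (volume.restrict (Icc a b)) :=
  ⟨aestronglyMeasurable_of_eqOn_primitive hg' hg,
    (eLpNorm_top_le_eLpNorm_one_of_eqOn_primitive hg).trans_lt
      (memLp_one_iff_integrable.2 hg').eLpNorm_lt_top⟩

theorem eLpNorm_top_le_eLpNorm_of_eqOn_primitive {p : ℝ≥0∞} (hp : 1 ≤ p)
    (hg' : AEStronglyMeasurable g' mu01) (hg : ∀ t ∈ Icc (0 : ℝ) 1, g t = ∫ s in Ioc 0 t, g' s) :
    eLpNorm g ∞ mu01 ≤ eLpNorm g' p mu01 :=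
  (eLpNorm_top_le_eLpNorm_one_of_eqOn_primitive hg).trans
    (eLpNorm_le_eLpNorm_of_exponent_le (μ := mu01) hp hg')

end Primitive

section ProductRule

variable {E : Type*} [NormedAddCommGroup E] [NormedSpace ℝ E] {a t : ℝ}

theorem setIntegral_Ioc_indicator_Iic {φ : ℝ → E} {s : ℝ} (hs : s ≤ t) :
    ∫ u in Ioc a t, (Iic s).indicator φ u = ∫ u in Ioc a s, φ u := by
  rw [integral_indicator measurableSet_Iic, Measure.restrict_restrict measurableSet_Iic,
    Iic_inter_Ioc_of_le hs]

theorem setIntegral_Ioc_indicator_Iio {φ : ℝ → E} {u : ℝ} (hu : u ≤ t) :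
    ∫ s in Ioc a t, (Iio u).indicator φ s = ∫ s in Ioc a u, φ s := by
  rw [integral_indicator measurableSet_Iio, Measure.restrict_restrict measurableSet_Iio,
    integral_Ioc_eq_integral_Ioo]
  congr 2
  ext s
  simp only [mem_inter_iff, mem_Iio, mem_Ioc, mem_Ioo]
  constructor
  · rintro ⟨hsu, has, -⟩; exact ⟨has, hsu⟩
  · rintro ⟨has, hsu⟩; exact ⟨hsu, has, hsu.le.trans hu⟩

variable {𝕜 : Type*} [RCLike 𝕜] {f g f' g' : ℝ → 𝕜}

theorem integral_Ioc_deriv_mul_add_mul_deriv (hf' : IntegrableOn f' (Ioc a t))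
    (hg' : IntegrableOn g' (Ioc a t)) (hf : ∀ s ∈ Ioc a t, f s = ∫ u in Ioc a s, f' u)
    (hg : ∀ s ∈ Ioc a t, g s = ∫ u in Ioc a s, g' u) :
    ∫ s in Ioc a t, (f' s * g s + f s * g' s) = (∫ s in Ioc a t, f' s) * ∫ s in Ioc a t, g' s := by
  set ν := volume.restrict (Ioc a t)
  set K : ℝ × ℝ → 𝕜 := fun z => f' z.1 * g' z.2 with hK_def
  set T : Set (ℝ × ℝ) := {z | z.2 ≤ z.1}
  have hT : MeasurableSet T := measurableSet_le measurable_snd measurable_fst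
  have hK : Integrable K (ν.prod ν) := hf'.mul_prod hg'
  have hmem : ∀ᵐ s ∂ν, s ∈ Ioc a t := ae_restrict_mem measurableSet_Ioc
  -- Cut the square `(a, t]²` along the diagonal: integrating `K` over the part `u ≤ s` gives
  -- `∫ f' g`, over the part `s < u` it gives `∫ f g'`.
  have below : ∀ᵐ s ∂ν, ∫ u, T.indicator K (s, u) ∂ν = f' s * g s := by
    filter_upwards [hmem] with s hs
    have : (fun u => T.indicator K (s, u)) = (Iic s).indicator (fun u => f' s * g' u) := by
      ext u; by_cases hus : u ≤ s <;> simp [T, hK_def, hus]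
    rw [this, setIntegral_Ioc_indicator_Iic hs.2, integral_const_mul, hg s hs]
  have above : ∀ᵐ u ∂ν, ∫ s, Tᶜ.indicator K (s, u) ∂ν = f u * g' u := by
    filter_upwards [hmem] with u hu
    have : (fun s => Tᶜ.indicator K (s, u)) = (Iio u).indicator (fun s => f' s * g' u) := by
      ext s; by_cases hsu : s < u <;> simp [T, hK_def, hsu]
    rw [this, setIntegral_Ioc_indicator_Iio hu.2, integral_mul_const, hf u hu]
  calc ∫ s, (f' s * g s + f s * g' s) ∂ν = ∫ s, f' s * g s ∂ν + ∫ s, f s * g' s ∂ν :=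
        integral_add ((hK.indicator hT).integral_prod_left.congr below)
          ((hK.indicator hT.compl).integral_prod_right.congr above)
    _ = ∫ z, T.indicator K z ∂ν.prod ν + ∫ z, Tᶜ.indicator K z ∂ν.prod ν := by
        rw [integral_prod _ (hK.indicator hT), integral_prod_symm _ (hK.indicator hT.compl),
          integral_congr_ae below, integral_congr_ae above]
    _ = ∫ z, K z ∂ν.prod ν := by
        rw [← integral_add (hK.indicator hT) (hK.indicator hT.compl)]
        simp only [indicator_self_add_compl_apply]
    _ = (∫ s, f' s ∂ν) * ∫ s, g' s ∂ν := integral_prod_mul f' g'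

end ProductRule

/-- For `1 ≤ p ≤ ∞`, if `f, h ∈ AC_p`, i.e.
`f t = ∫₀ᵗ f'` and `h t = ∫₀ᵗ h'` on `[0,1]` with `f', h' ∈ L^p[0,1]`, then the
pointwise product `f·h` belongs to `AC_p` with derivative `f'h + fh' ∈ L^p[0,1]`,
and `|||fh||| = ‖f'h + fh'‖_p ≤ 2 |||f||| |||h|||`. -/
theorem ACp_mul_mem_and_norm_le
    (p : ℝ≥0∞) (hp : 1 ≤ p)
    (f h f' h' : ℝ → ℂ)
    (hf' : MemLp f' p mu01)
    (hf : ∀ t ∈ Set.Icc (0 : ℝ) 1, f t = ∫ s in Set.Ioc (0 : ℝ) t, f' s)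
    (hh' : MemLp h' p mu01)
    (hh : ∀ t ∈ Set.Icc (0 : ℝ) 1, h t = ∫ s in Set.Ioc (0 : ℝ) t, h' s) :
    MemLp (fun t => f' t * h t + f t * h' t) p mu01 ∧
    (∀ t ∈ Set.Icc (0 : ℝ) 1,
      f t * h t = ∫ s in Set.Ioc (0 : ℝ) t, (f' s * h s + f s * h' s)) ∧
    eLpNorm (fun t => f' t * h t + f t * h' t) p mu01 ≤
      2 * eLpNorm f' p mu01 * eLpNorm h' p mu01 := by
  have hf'₁ : IntegrableOn f' (Icc 0 1) := memLp_one_iff_integrable.1 (hf'.mono_exponent hp)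
  have hh'₁ : IntegrableOn h' (Icc 0 1) := memLp_one_iff_integrable.1 (hh'.mono_exponent hp)
  have hf_top : MemLp f ∞ mu01 := memLp_top_of_eqOn_primitive hf'₁ hf
  have hh_top : MemLp h ∞ mu01 := memLp_top_of_eqOn_primitive hh'₁ hh
  refine ⟨(hh_top.mul' hf').add (hh'.mul' hf_top), fun t ht => ?_, ?_⟩
  · have hsub : Ioc 0 t ⊆ Icc 0 1 := Ioc_subset_Icc_self.trans (Icc_subset_Icc_right ht.2)
    rw [hf t ht, hh t ht, integral_Ioc_deriv_mul_add_mul_deriv (hf'₁.mono_set hsub)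
      (hh'₁.mono_set hsub) (fun s hs => hf s (hsub hs)) (fun s hs => hh s (hsub hs))]
  calc eLpNorm (fun t => f' t * h t + f t * h' t) p mu01
      ≤ eLpNorm (f' • h) p mu01 + eLpNorm (f • h') p mu01 :=
        eLpNorm_add_le (hf'.1.mul hh_top.1) (hf_top.1.mul hh'.1) hp
    _ ≤ eLpNorm f' p mu01 * eLpNorm h ∞ mu01 + eLpNorm f ∞ mu01 * eLpNorm h' p mu01 :=
        add_le_add (eLpNorm_smul_le_eLpNorm_mul_eLpNorm_top p h hf'.1)
          (eLpNorm_smul_le_eLpNorm_top_mul_eLpNorm p hh'.1 f)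
    _ ≤ eLpNorm f' p mu01 * eLpNorm h' p mu01 + eLpNorm f' p mu01 * eLpNorm h' p mu01 := by
        gcongr
        · exact eLpNorm_top_le_eLpNorm_of_eqOn_primitive hp hh'.1 hh
        · exact eLpNorm_top_le_eLpNorm_of_eqOn_primitive hp hf'.1 hf
    _ = 2 * eLpNorm f' p mu01 * eLpNorm h' p mu01 := by ring
end

section
/- Let 1 ≤ p < ∞ and for α ∈ (0,1] define e_α : [0,1] → ℂ by e_α(t) = min(t/α, 1). Then for every g ∈ AC_p the product e_α g belongs to AC_p, one has the bound |||e_α g − g||| ≤ (p^{−1/p} + 1) ‖g'·χ_{[0,α]}‖_p, and consequently |||e_α g − g||| → 0 as α → 0⁺. Thus {e_α} is an approximate identity for AC_p for 1 ≤ p < ∞. -/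
/-!
Writing `g(t) = ∫₀ᵗ g'`, Fubini on the triangle `0 < u ≤ s ≤ t` gives the product rule
`e_α g = ∫₀ᵗ (e_α' g + e_α g')` for primitives of integrable functions. Then
`(e_α g - g)' = α⁻¹ χ_{[0,α)} g + (e_α - 1) g'`. The second term is dominated pointwise by
`|g' χ_{[0,α]}|`. For the first, Hölder gives `|g(t)| ≤ t^{1-1/p} ‖g' χ_{[0,α]}‖_p`, and
`∫₀^α α^{-p} t^{p-1} dt = 1/p` produces the constant `p^{-1/p}`. Finally `‖g' χ_{[0,α]}‖_p → 0`
because a single `L^p` function is uniformly integrable.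
-/

open MeasureTheory Set Filter
open scoped ENNReal NNReal Topology

section ProductRule

variable {𝕜 : Type*} [RCLike 𝕜] {h f : ℝ → 𝕜} {a b : ℝ}

theorem integral_mul_primitive_eq_integral_integral_mul (hab : a ≤ b)
    (hh : IntervalIntegrable h volume a b) (hf : IntervalIntegrable f volume a b) :
    ∫ s in a..b, h s * ∫ u in a..s, f u = ∫ u in a..b, (∫ s in u..b, h s) * f u := by
  rw [intervalIntegrable_iff_integrableOn_Ioc_of_le hab] at hh hf
  set F : ℝ → ℝ → 𝕜 := fun s u => {z : ℝ × ℝ | z.2 ≤ z.1}.indicator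
    (fun z => (Ioc a b).indicator h z.1 * (Ioc a b).indicator f z.2) (s, u)
  have hF : Integrable (Function.uncurry F) (volume.prod volume) :=
    ((hh.integrable_indicator measurableSet_Ioc).mul_prod
      (hf.integrable_indicator measurableSet_Ioc)).indicator
      (measurableSet_le measurable_snd measurable_fst)
  have h_left (s : ℝ) :
      ∫ u, F s u = (Ioc a b).indicator (fun s => h s * ∫ u in a..s, f u) s := by
    by_cases hs : s ∈ Ioc a b
    · have h_slice : F s = fun u => h s * (Ioc a s).indicator f u := by
        ext u
        simp only [F, indicator_apply, mem_ofPred_eq, mem_Ioc] at hs ⊢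
        split_ifs <;> grind
      rw [h_slice, integral_const_mul, integral_indicator measurableSet_Ioc, indicator_of_mem hs,
        intervalIntegral.integral_of_le hs.1.le]
    · have h_slice : F s = 0 := by
        ext u
        simp only [F, indicator_apply, mem_ofPred_eq, mem_Ioc, Pi.zero_apply] at hs ⊢
        split_ifs <;> grind
      rw [h_slice, indicator_of_notMem hs, Pi.zero_def, integral_zero]
  have h_right (u : ℝ) :
      ∫ s, F s u = (Ioc a b).indicator (fun u => (∫ s in u..b, h s) * f u) u := by
    by_cases hu : u ∈ Ioc a b
    · have h_slice : (fun s => F s u) = fun s => (Icc u b).indicator h s * f u := by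
        ext s
        simp only [F, indicator_apply, mem_ofPred_eq, mem_Ioc, mem_Icc] at hu ⊢
        split_ifs <;> grind
      rw [h_slice, integral_mul_const, integral_indicator measurableSet_Icc, indicator_of_mem hu,
        integral_Icc_eq_integral_Ioc, intervalIntegral.integral_of_le hu.2]
    · have h_slice : (fun s => F s u) = 0 := by
        ext s
        simp only [F, indicator_apply, mem_ofPred_eq, mem_Ioc, Pi.zero_apply] at hu ⊢
        split_ifs <;> grind
      rw [h_slice, indicator_of_notMem hu, Pi.zero_def, integral_zero]
  have h_swap := integral_integral_swap hF
  simp only [h_left, h_right, integral_indicator measurableSet_Ioc] at h_swap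
  simpa only [intervalIntegral.integral_of_le hab] using h_swap

theorem integral_mul_integral_eq_integral_mul_primitive_add (hab : a ≤ b)
    (hh : IntervalIntegrable h volume a b) (hf : IntervalIntegrable f volume a b) :
    (∫ x in a..b, h x) * (∫ x in a..b, f x) =
      ∫ s in a..b, (h s * (∫ u in a..s, f u) + (∫ u in a..s, h u) * f s) := by
  have hH := intervalIntegral.continuousOn_primitive_interval' hh left_mem_uIcc
  have hF := intervalIntegral.continuousOn_primitive_interval' hf left_mem_uIcc
  have hHf : IntervalIntegrable (fun s => (∫ u in a..s, h u) * f s) volume a b :=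
    hf.continuousOn_mul hH
  calc (∫ x in a..b, h x) * (∫ x in a..b, f x)
      = ∫ u in a..b, (((∫ s in a..b, h s) - ∫ s in a..u, h s) * f u
          + (∫ s in a..u, h s) * f u) := by
        rw [← intervalIntegral.integral_const_mul]
        exact intervalIntegral.integral_congr fun u _ => by ring
    _ = (∫ u in a..b, ((∫ s in a..b, h s) - ∫ s in a..u, h s) * f u)
          + ∫ u in a..b, (∫ s in a..u, h s) * f u :=
        intervalIntegral.integral_add (hf.continuousOn_mul (continuousOn_const.sub hH)) hHf
    _ = (∫ s in a..b, h s * ∫ u in a..s, f u) + ∫ u in a..b, (∫ s in a..u, h s) * f u := by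
        rw [integral_mul_primitive_eq_integral_integral_mul hab hh hf]
        congr 1
        refine intervalIntegral.integral_congr fun u hu => ?_
        rw [intervalIntegral.integral_interval_sub_left hh (hh.mono_set (uIcc_subset_uIcc_left hu))]
    _ = _ := (intervalIntegral.integral_add (hh.mul_continuousOn hF) hHf).symm

end ProductRule

theorem enorm_setIntegral_le_eLpNorm_mul_measure_rpow {X E : Type*} [MeasurableSpace X]
    [NormedAddCommGroup E] [NormedSpace ℝ E] {μ : Measure X} {f : X → E} {s : Set X}
    {p : ℝ≥0∞} (hp : 1 ≤ p) (hf : AEStronglyMeasurable f (μ.restrict s)) :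
    ‖∫ x in s, f x ∂μ‖ₑ ≤ eLpNorm f p (μ.restrict s) * μ s ^ (1 - 1 / p.toReal) := by
  refine (enorm_integral_le_lintegral_enorm _).trans ?_
  rw [← eLpNorm_one_eq_lintegral_enorm]
  refine (eLpNorm_le_eLpNorm_mul_rpow_measure_univ hp hf).trans_eq ?_
  rw [Measure.restrict_apply_univ, ENNReal.toReal_one, div_one]

theorem eLpNorm_rpow_restrict_Ioc {p : ℝ≥0∞} (hp0 : p ≠ 0) (hp : p ≠ ∞) {a : ℝ}
    (ha : 0 ≤ a) :
    eLpNorm (fun t : ℝ => t ^ (1 - 1 / p.toReal)) p (volume.restrict (Ioc 0 a)) =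
      ENNReal.ofReal (p.toReal ^ (-(1 / p.toReal)) * a) := by
  set q := p.toReal
  have hq : 0 < q := ENNReal.toReal_pos hp0 hp
  have h_pow :
      ∀ t ∈ Ioc (0 : ℝ) a, ‖t ^ (1 - 1 / q)‖ₑ ^ q = ENNReal.ofReal (t ^ (q - 1)) := by
    intro t ht
    rw [Real.enorm_of_nonneg (Real.rpow_nonneg ht.1.le _), ENNReal.ofReal_rpow_of_nonneg
      (Real.rpow_nonneg ht.1.le _) hq.le, ← Real.rpow_mul ht.1.le]
    congr 2
    field_simp
  have h_int : ∫⁻ t in Ioc 0 a, ‖t ^ (1 - 1 / q)‖ₑ ^ q = ENNReal.ofReal (a ^ q / q) := by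
    rw [setLIntegral_congr_fun measurableSet_Ioc h_pow, ← ofReal_integral_eq_lintegral_ofReal,
      ← intervalIntegral.integral_of_le ha, integral_rpow (Or.inl (by linarith)),
      sub_add_cancel, Real.zero_rpow hq.ne', sub_zero]
    · exact (intervalIntegrable_iff_integrableOn_Ioc_of_le ha).1
        (intervalIntegral.intervalIntegrable_rpow' (by linarith))
    · filter_upwards [ae_restrict_mem measurableSet_Ioc] with t ht
      exact Real.rpow_nonneg ht.1.le _
  rw [eLpNorm_eq_lintegral_rpow_enorm_toReal hp0 hp, h_int,
    ENNReal.ofReal_rpow_of_nonneg (by positivity) (by positivity), Real.div_rpow (by positivity)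
    hq.le, one_div, Real.rpow_rpow_inv ha hq.ne', Real.rpow_neg hq.le, div_eq_inv_mul]

theorem eLpNorm_indicator_Ico_smul_primitive_le {E : Type*} [NormedAddCommGroup E]
    [NormedSpace ℝ E] {f : ℝ → E} {α : ℝ} (hα : 0 < α) {p : ℝ≥0∞} (hp1 : 1 ≤ p)
    (hp : p ≠ ∞) (hf : AEStronglyMeasurable f (volume.restrict (Ioc 0 α))) :
    eLpNorm ((Ico 0 α).indicator fun t => α⁻¹ • ∫ s in Ioc 0 t, f s) p volume ≤
      ENNReal.ofReal (p.toReal ^ (-(1 / p.toReal))) *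
        eLpNorm f p (volume.restrict (Ioc 0 α)) := by
  set q := p.toReal
  set C := eLpNorm f p (volume.restrict (Ioc 0 α))
  have hp0 : p ≠ 0 := (zero_lt_one.trans_le hp1).ne'
  have hq : 0 < q := ENNReal.toReal_pos hp0 hp
  have hr : 0 ≤ 1 - 1 / q := by
    have hq1 : 1 ≤ q := by simpa using ENNReal.toReal_mono hp hp1
    exact sub_nonneg.2 ((div_le_one hq).2 hq1)
  by_cases hC : C = ∞
  · rw [hC, ENNReal.mul_top (by simp [Real.rpow_pos_of_pos hq])]
    exact le_top
  have h_pointwise (t : ℝ) :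
      ‖(Ico 0 α).indicator (fun t => α⁻¹ • ∫ s in Ioc 0 t, f s) t‖ₑ ≤
        ‖((α⁻¹ * C.toReal) • (Ioc 0 α).indicator (fun t : ℝ => t ^ (1 - 1 / q))) t‖ₑ := by
    by_cases ht : t ∈ Ico 0 α
    · obtain rfl | ht0 := ht.1.eq_or_lt
      · simp
      have hHolder := enorm_setIntegral_le_eLpNorm_mul_measure_rpow hp1
        (hf.mono_measure (Measure.restrict_mono (Ioc_subset_Ioc_right ht.2.le) le_rfl))
      rw [Real.volume_Ioc, sub_zero] at hHolder
      rw [indicator_of_mem ht, Pi.smul_apply,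
        indicator_of_mem (show t ∈ Ioc 0 α from ⟨ht0, ht.2.le⟩), smul_eq_mul,
        Real.enorm_of_nonneg (by positivity), ENNReal.ofReal_mul (by positivity),
        ENNReal.ofReal_mul (by positivity), ENNReal.ofReal_toReal hC,
        ← ENNReal.ofReal_rpow_of_nonneg ht0.le hr, mul_assoc, enorm_smul,
        Real.enorm_of_nonneg (inv_nonneg.2 hα.le)]
      gcongr
      refine hHolder.trans ?_
      gcongr
      exact eLpNorm_mono_measure _ (Measure.restrict_mono (Ioc_subset_Ioc_right ht.2.le) le_rfl)
    · simp [ht]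
  refine (eLpNorm_mono_enorm h_pointwise).trans_eq ?_
  rw [eLpNorm_const_smul, eLpNorm_indicator_eq_eLpNorm_restrict measurableSet_Ioc,
    eLpNorm_rpow_restrict_Ioc hp0 hp hα.le, Real.enorm_of_nonneg (by positivity),
    ← ENNReal.ofReal_mul (by positivity)]
  rw [show α⁻¹ * C.toReal * (q ^ (-(1 / q)) * α) = q ^ (-(1 / q)) * C.toReal by
      field_simp, ENNReal.ofReal_mul (by positivity), ENNReal.ofReal_toReal hC]

theorem MeasureTheory.MemLp.tendsto_eLpNorm_indicator {X E ι : Type*} [MeasurableSpace X]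
    [NormedAddCommGroup E] {μ : Measure X} {p : ℝ≥0∞} {f : X → E} (hf : MemLp f p μ)
    (hp1 : 1 ≤ p) (hp : p ≠ ∞) {l : Filter ι} {s : ι → Set X}
    (hs : ∀ i, MeasurableSet (s i)) (hμs : Tendsto (fun i => μ (s i)) l (𝓝 0)) :
    Tendsto (fun i => eLpNorm ((s i).indicator f) p μ) l (𝓝 0) := by
  rw [ENNReal.tendsto_nhds_zero] at hμs ⊢
  intro ε hε
  obtain rfl | hε_top := eq_or_ne ε ∞
  · exact Eventually.of_forall fun _ => le_top
  obtain ⟨δ, hδ, hδε⟩ := hf.eLpNorm_indicator_le hp1 hp (ENNReal.toReal_pos hε.ne' hε_top)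
  filter_upwards [hμs _ (ENNReal.ofReal_pos.2 hδ)] with i hi
  exact (hδε _ (hs i) hi).trans_eq (ENNReal.ofReal_toReal hε_top)

-- `ramp α` is the paper's `e_α`; `rampDeriv α` is its derivative off `{0, α}`.
noncomputable def ramp (α t : ℝ) : ℝ := min (t / α) 1

noncomputable def rampDeriv (α : ℝ) : ℝ → ℂ :=
  (Ico 0 α).indicator fun _ => (α : ℂ)⁻¹

section Ramp

variable {α t : ℝ}

theorem ramp_mem_Icc (hα : 0 ≤ α) (ht : 0 ≤ t) : ramp α t ∈ Icc 0 1 :=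
  ⟨le_min (div_nonneg ht hα) zero_le_one, min_le_right _ _⟩

theorem continuous_ramp (α : ℝ) : Continuous (ramp α) :=
  (continuous_id.div_const α).min continuous_const

theorem ramp_of_le (hα : 0 < α) (ht : α ≤ t) : ramp α t = 1 :=
  min_eq_right ((one_le_div hα).2 ht)

theorem integral_rampDeriv (hα : 0 < α) (ht : 0 ≤ t) :
    ∫ s in 0..t, rampDeriv α s = ramp α t := by
  rw [intervalIntegral.integral_of_le ht, rampDeriv, setIntegral_indicator measurableSet_Ico,
    setIntegral_const, ramp]
  rcases le_or_gt α t with hαt | htα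
  · have h_set : Ioc 0 t ∩ Ico 0 α = Ioo 0 α := by
      ext s; simp only [mem_inter_iff, mem_Ioc, mem_Ico, mem_Ioo]; grind
    rw [h_set, Real.volume_real_Ioo_of_le hα.le, sub_zero, min_eq_right ((one_le_div hα).2 hαt),
      Complex.real_smul, mul_inv_cancel₀ (by exact_mod_cast hα.ne'), Complex.ofReal_one]
  · have h_set : Ioc 0 t ∩ Ico 0 α = Ioc 0 t := by
      ext s; simp only [mem_inter_iff, mem_Ioc, mem_Ico]; grind
    rw [h_set, Real.volume_real_Ioc_of_le ht, sub_zero, min_eq_left ((div_le_one hα).2 htα.le),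
      Complex.real_smul, Complex.ofReal_div, div_eq_mul_inv]

end Ramp

instance : IsFiniteMeasure mu01 := by
  unfold mu01
  infer_instance

theorem mu01_le_volume : mu01 ≤ volume := Measure.restrict_le_self

theorem tendsto_mu01_Icc_nhdsGT_zero :
    Tendsto (fun α => mu01 (Icc 0 α)) (𝓝[>] 0) (𝓝 0) := by
  have h_vol : Tendsto (fun α => ENNReal.ofReal α) (𝓝[>] 0) (𝓝 0) := by
    simpa using (ENNReal.tendsto_ofReal tendsto_id).mono_left (nhdsWithin_le_nhds (a := (0 : ℝ)))
  refine tendsto_of_tendsto_of_tendsto_of_le_of_le tendsto_const_nhds h_vol (fun _ => bot_le)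
    fun α => ?_
  calc mu01 (Icc 0 α) ≤ volume (Icc 0 α) := mu01_le_volume _
    _ = ENNReal.ofReal α := by rw [Real.volume_Icc, sub_zero]

section ACp

variable {p : ℝ≥0∞} {g g' : ℝ → ℂ} {α : ℝ}

theorem continuousOn_of_eq_primitive (hg' : IntegrableOn g' (Icc 0 1))
    (hg : ∀ t ∈ Icc (0 : ℝ) 1, g t = ∫ s in Ioc 0 t, g' s) : ContinuousOn g (Icc 0 1) := by
  have h := intervalIntegral.continuousOn_primitive_interval (a := 0) (b := 1)
    (f := g') (μ := volume) (by rwa [uIcc_of_le zero_le_one])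
  rw [uIcc_of_le zero_le_one] at h
  exact h.congr fun t ht => by simp only [hg t ht, intervalIntegral.integral_of_le ht.1]

theorem ramp_mul_eq_integral (hα : 0 < α) (hg' : IntegrableOn g' (Icc 0 1))
    (hg : ∀ t ∈ Icc (0 : ℝ) 1, g t = ∫ s in Ioc 0 t, g' s) {t : ℝ}
    (ht : t ∈ Icc (0 : ℝ) 1) :
    (ramp α t : ℂ) * g t = ∫ s in Ioc 0 t, (rampDeriv α s * g s + ramp α s * g' s) := by
  have hg_eq : ∀ s ∈ Icc (0 : ℝ) 1, g s = ∫ u in 0..s, g' u := fun s hs => by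
    rw [hg s hs, intervalIntegral.integral_of_le hs.1]
  have hρ : IntervalIntegrable (rampDeriv α) volume 0 t :=
    (intervalIntegrable_iff_integrableOn_Ioc_of_le ht.1).2
      ((integrableOn_const (C := (α : ℂ)⁻¹) measure_Ioc_lt_top.ne).indicator measurableSet_Ico)
  have hg't : IntervalIntegrable g' volume 0 t :=
    (intervalIntegrable_iff_integrableOn_Icc_of_le ht.1).2
      (hg'.mono_set (Icc_subset_Icc_right ht.2))
  rw [← integral_rampDeriv hα ht.1, hg_eq t ht,
    integral_mul_integral_eq_integral_mul_primitive_add ht.1 hρ hg't,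
    intervalIntegral.integral_of_le ht.1]
  refine setIntegral_congr_fun measurableSet_Ioc fun s hs => ?_
  have hs' : s ∈ Icc (0 : ℝ) 1 := ⟨hs.1.le, hs.2.trans ht.2⟩
  rw [← hg_eq s hs', integral_rampDeriv hα hs.1.le]

theorem aestronglyMeasurable_rampDeriv_mul (hg : ContinuousOn g (Icc 0 1)) :
    AEStronglyMeasurable (fun t => rampDeriv α t * g t) mu01 :=
  (aestronglyMeasurable_const.indicator measurableSet_Ico).mul
    (hg.aestronglyMeasurable measurableSet_Icc)

theorem eLpNorm_rampDeriv_mul_le (hα : α ∈ Ioc 0 1) (hp1 : 1 ≤ p) (hp : p ≠ ∞)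
    (hg' : AEStronglyMeasurable g' mu01)
    (hg : ∀ t ∈ Icc (0 : ℝ) 1, g t = ∫ s in Ioc 0 t, g' s) :
    eLpNorm (fun t => rampDeriv α t * g t) p mu01 ≤
      ENNReal.ofReal (p.toReal ^ (-(1 / p.toReal))) *
        eLpNorm ((Icc 0 α).indicator g') p mu01 := by
  have h_restrict : ∀ s ⊆ Icc (0 : ℝ) 1, mu01.restrict s = volume.restrict s :=
    fun s hs => Measure.restrict_restrict_of_subset hs
  have h_eq : (fun t => rampDeriv α t * g t) =ᵐ[mu01]
      (Ico 0 α).indicator fun t => α⁻¹ • ∫ s in Ioc 0 t, g' s := by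
    filter_upwards [ae_restrict_mem measurableSet_Icc] with t ht
    by_cases h : t ∈ Ico 0 α
    · simp [rampDeriv, h, hg t ht, Complex.real_smul]
    · simp [rampDeriv, h]
  calc eLpNorm (fun t => rampDeriv α t * g t) p mu01
      = eLpNorm ((Ico 0 α).indicator fun t => α⁻¹ • ∫ s in Ioc 0 t, g' s) p mu01 :=
        eLpNorm_congr_ae h_eq
    _ ≤ eLpNorm ((Ico 0 α).indicator fun t => α⁻¹ • ∫ s in Ioc 0 t, g' s) p volume :=
        eLpNorm_mono_measure _ mu01_le_volume
    _ ≤ ENNReal.ofReal (p.toReal ^ (-(1 / p.toReal))) *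
          eLpNorm g' p (volume.restrict (Ioc 0 α)) :=
        eLpNorm_indicator_Ico_smul_primitive_le hα.1 hp1 hp <| by
          rw [← h_restrict _ (Ioc_subset_Icc_self.trans (Icc_subset_Icc_right hα.2))]
          exact hg'.restrict
    _ ≤ _ := by
        rw [eLpNorm_indicator_eq_eLpNorm_restrict measurableSet_Icc,
          h_restrict _ (Icc_subset_Icc_right hα.2)]
        gcongr
        exact Ioc_subset_Icc_self

theorem eLpNorm_ramp_sub_one_mul_le (hα : 0 < α) :
    eLpNorm (fun t => ((ramp α t : ℂ) - 1) * g' t) p mu01 ≤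
      eLpNorm ((Icc 0 α).indicator g') p mu01 := by
  refine eLpNorm_mono_ae ?_
  filter_upwards [ae_restrict_mem measurableSet_Icc] with t ht
  rcases le_or_gt α t with hαt | htα
  · simp [ramp_of_le hα hαt]
  · have h := ramp_mem_Icc hα.le ht.1
    rw [indicator_of_mem (show t ∈ Icc 0 α from ⟨ht.1, htα.le⟩), norm_mul,
      ← Complex.ofReal_one, ← Complex.ofReal_sub, Complex.norm_real, Real.norm_eq_abs]
    refine mul_le_of_le_one_left (norm_nonneg _) (abs_le.2 ⟨?_, ?_⟩) <;> linarith [h.1, h.2]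

theorem eLpNorm_rampDeriv_mul_add_ramp_mul_sub_le (hα : α ∈ Ioc 0 1) (hp1 : 1 ≤ p)
    (hp : p ≠ ∞) (hg' : AEStronglyMeasurable g' mu01) (hg_cont : ContinuousOn g (Icc 0 1))
    (hg : ∀ t ∈ Icc (0 : ℝ) 1, g t = ∫ s in Ioc 0 t, g' s) :
    eLpNorm (fun t => rampDeriv α t * g t + ramp α t * g' t - g' t) p mu01 ≤
      ENNReal.ofReal (p.toReal ^ (-(1 / p.toReal)) + 1) *
        eLpNorm ((Icc 0 α).indicator g') p mu01 := by
  have h_split : (fun t => rampDeriv α t * g t + ramp α t * g' t - g' t) =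
      (fun t => rampDeriv α t * g t) + fun t => ((ramp α t : ℂ) - 1) * g' t := by
    ext t; simp only [Pi.add_apply]; ring
  rw [h_split, ENNReal.ofReal_add (by positivity) zero_le_one, ENNReal.ofReal_one, add_mul,
    one_mul]
  refine (eLpNorm_add_le (aestronglyMeasurable_rampDeriv_mul hg_cont)
    (((Complex.continuous_ofReal.comp (continuous_ramp α)).sub continuous_const
      ).aestronglyMeasurable.mul hg') hp1).trans ?_
  exact add_le_add (eLpNorm_rampDeriv_mul_le hα hp1 hp hg' hg)
    (eLpNorm_ramp_sub_one_mul_le hα.1)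

theorem memLp_rampDeriv_mul_add_ramp_mul (hα : α ∈ Ioc 0 1) (hp1 : 1 ≤ p) (hp : p ≠ ∞)
    (hg' : MemLp g' p mu01) (hg_cont : ContinuousOn g (Icc 0 1))
    (hg : ∀ t ∈ Icc (0 : ℝ) 1, g t = ∫ s in Ioc 0 t, g' s) :
    MemLp (fun t => rampDeriv α t * g t + ramp α t * g' t) p mu01 := by
  have h_first : MemLp (fun t => rampDeriv α t * g t) p mu01 :=
    ⟨aestronglyMeasurable_rampDeriv_mul hg_cont,
      (eLpNorm_rampDeriv_mul_le hα hp1 hp hg'.1 hg).trans_lt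
        (ENNReal.mul_lt_top ENNReal.ofReal_lt_top ((eLpNorm_indicator_le _).trans_lt hg'.2))⟩
  refine h_first.add (hg'.of_le ((Complex.continuous_ofReal.comp
    (continuous_ramp α)).aestronglyMeasurable.mul hg'.1) ?_)
  filter_upwards [ae_restrict_mem measurableSet_Icc] with t ht
  have h := ramp_mem_Icc hα.1.le ht.1
  rw [norm_mul, Complex.norm_real, Real.norm_eq_abs, abs_of_nonneg h.1]
  exact mul_le_of_le_one_left (norm_nonneg _) h.2

end ACp

/-- Let `1 ≤ p < ∞` and for `α ∈ (0,1]` let `e_α t = min (t/α) 1`,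
whose derivative is `e_α' = α⁻¹ · χ_{[0,α)}`.  For every `g ∈ AC_p` (with derivative
`g' ∈ L^p[0,1]`), the product `e_α g` belongs to `AC_p` with derivative
`D_α = e_α' g + e_α g'`, one has
`|||e_α g − g||| = ‖D_α − g'‖_p ≤ (p^{−1/p} + 1) ‖g'·χ_{[0,α]}‖_p`,
and consequently `|||e_α g − g||| → 0` as `α → 0⁺`: `{e_α}` is an approximate
identity for `AC_p`. -/
theorem ACp_approximate_identity
    (p : ℝ≥0∞) (hp1 : 1 ≤ p) (hp_top : p ≠ ∞)
    (g g' : ℝ → ℂ)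
    (hg' : MemLp g' p mu01)
    (hg : ∀ t ∈ Set.Icc (0 : ℝ) 1, g t = ∫ s in Set.Ioc (0 : ℝ) t, g' s) :
    (∀ α ∈ Set.Ioc (0 : ℝ) 1,
      MemLp (fun t => (Set.Ico (0 : ℝ) α).indicator (fun _ => ((α : ℂ))⁻¹) t * g t
          + ((min (t / α) 1 : ℝ) : ℂ) * g' t) p mu01 ∧
      (∀ t ∈ Set.Icc (0 : ℝ) 1,
        ((min (t / α) 1 : ℝ) : ℂ) * g t =
          ∫ s in Set.Ioc (0 : ℝ) t,
            ((Set.Ico (0 : ℝ) α).indicator (fun _ => ((α : ℂ))⁻¹) s * g s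
              + ((min (s / α) 1 : ℝ) : ℂ) * g' s)) ∧
      eLpNorm (fun t => (Set.Ico (0 : ℝ) α).indicator (fun _ => ((α : ℂ))⁻¹) t * g t
          + ((min (t / α) 1 : ℝ) : ℂ) * g' t - g' t) p mu01 ≤
        ENNReal.ofReal (p.toReal ^ (-(1 / p.toReal)) + 1) *
          eLpNorm ((Set.Icc (0 : ℝ) α).indicator g') p mu01) ∧
    Tendsto (fun α : ℝ =>
        eLpNorm (fun t => (Set.Ico (0 : ℝ) α).indicator (fun _ => ((α : ℂ))⁻¹) t * g t
          + ((min (t / α) 1 : ℝ) : ℂ) * g' t - g' t) p mu01)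
      (𝓝[>] (0 : ℝ)) (𝓝 0) := by
  have hg'_int : IntegrableOn g' (Icc 0 1) := hg'.integrable hp1
  have hg_cont : ContinuousOn g (Icc 0 1) := continuousOn_of_eq_primitive hg'_int hg
  have h_bound := fun α (hα : α ∈ Ioc (0 : ℝ) 1) =>
    eLpNorm_rampDeriv_mul_add_ramp_mul_sub_le hα hp1 hp_top hg'.1 hg_cont hg
  refine ⟨fun α hα => ⟨memLp_rampDeriv_mul_add_ramp_mul hα hp1 hp_top hg' hg_cont hg,
    fun t ht => ramp_mul_eq_integral hα.1 hg'_int hg ht, h_bound α hα⟩, ?_⟩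
  have h_lim := ENNReal.Tendsto.const_mul (hg'.tendsto_eLpNorm_indicator hp1 hp_top
    (fun _ => measurableSet_Icc) tendsto_mu01_Icc_nhdsGT_zero)
      (Or.inr (ENNReal.ofReal_ne_top (r := p.toReal ^ (-(1 / p.toReal)) + 1)))
  rw [mul_zero] at h_lim
  refine tendsto_of_tendsto_of_tendsto_of_le_of_le' tendsto_const_nhds h_lim
    (Eventually.of_forall fun _ => bot_le) ?_
  filter_upwards [Ioc_mem_nhdsGT zero_lt_one] with α hα using h_bound α hα
end

section
/- Let ι ∈ AC_∞ denote the function ι(t) = t. For every g ∈ AC_∞, |||ι·g − ι||| = ess sup_{t ∈ [0,1]} |t g'(t) + g(t) − 1| ≥ 1. Consequently, AC_∞ has no approximate identity. -/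
open MeasureTheory Set Filter
open scoped ENNReal NNReal Topology

theorem le_eLpNorm_top_of_frequently {α ε : Type*} [MeasurableSpace α] [ENorm ε]
    {μ : Measure α} {f : α → ε} {c : ℝ≥0∞} (h : ∃ᵐ x ∂μ, c ≤ ‖f x‖ₑ) :
    c ≤ eLpNorm f ∞ μ := by
  rw [eLpNorm_exponent_top]
  exact le_limsup_of_frequently_le' h

theorem MeasureTheory.MemLp.ae_norm_le_toReal_eLpNorm_top {α E : Type*} [MeasurableSpace α]
    [NormedAddCommGroup E] {μ : Measure α} {f : α → E} (hf : MemLp f ∞ μ) :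
    ∀ᵐ x ∂μ, ‖f x‖ ≤ (eLpNorm f ∞ μ).toReal := by
  filter_upwards [enorm_ae_le_eLpNormEssSup f μ] with x hx
  rw [← eLpNorm_exponent_top] at hx
  simpa using ENNReal.toReal_mono hf.2.ne hx

theorem frequently_ae_mu01_lt {δ : ℝ} (hδ : 0 < δ) : ∃ᵐ t ∂mu01, t < δ := by
  rw [frequently_ae_iff, mu01, Measure.restrict_apply' measurableSet_Icc]
  have hsub : Ioo 0 (min δ 1) ⊆ {t | t < δ} ∩ Icc 0 1 := fun t ht =>
    ⟨ht.2.trans_le (min_le_left _ _),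
      Ioo_subset_Icc_self ⟨ht.1, ht.2.trans_le (min_le_right _ _)⟩⟩
  refine (lt_of_lt_of_le ?_ (measure_mono hsub)).ne'
  simp [hδ]

theorem ofReal_le_eLpNorm_top_mu01 {E : Type*} [NormedAddCommGroup E] {f : ℝ → E} {c K : ℝ}
    (h : ∀ᵐ t ∂mu01, c - K * t ≤ ‖f t‖) : ENNReal.ofReal c ≤ eLpNorm f ∞ mu01 := by
  refine le_of_forall_lt_imp_le_of_dense fun b hb => le_eLpNorm_top_of_frequently ?_
  have hb_top : b ≠ ∞ := (hb.trans ENNReal.ofReal_lt_top).ne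
  have hbc : b.toReal < c := (ENNReal.lt_ofReal_iff_toReal_lt hb_top).1 hb
  set δ := (c - b.toReal) / (|K| + 1)
  have hδ : 0 < δ := div_pos (by linarith) (by positivity)
  refine ((frequently_ae_mu01_lt hδ).and_eventually
    (h.and (ae_restrict_mem measurableSet_Icc))).mono fun t ⟨htδ, hft, ht⟩ => ?_
  have hKt : K * t < c - b.toReal := calc
    K * t ≤ (|K| + 1) * t := by
      gcongr
      exacts [ht.1, (le_abs_self K).trans (le_add_of_nonneg_right zero_le_one)]
    _ < c - b.toReal := (lt_div_iff₀' (by positivity)).1 htδ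
  rw [← ofReal_norm, ← ENNReal.ofReal_toReal hb_top]
  exact ENNReal.ofReal_le_ofReal (by linarith)

theorem norm_integral_Ioc_le_mul {E : Type*} [NormedAddCommGroup E] [NormedSpace ℝ E]
    {g' : ℝ → E} {M t : ℝ} (hM : ∀ᵐ s ∂mu01, ‖g' s‖ ≤ M) (ht : t ∈ Icc 0 1) :
    ‖∫ s in Ioc 0 t, g' s‖ ≤ M * t := by
  have hsub : Ioc 0 t ⊆ Icc 0 1 := fun s hs => ⟨hs.1.le, hs.2.trans ht.2⟩
  have := norm_setIntegral_le_of_norm_le_const_ae measure_Ioc_lt_top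
    (ae_restrict_of_ae_restrict_of_subset hsub hM)
  rwa [Real.volume_real_Ioc_of_le ht.1, sub_zero] at this

theorem one_le_eLpNorm_deriv_id_mul_sub_id (g g' : ℝ → ℂ) (hg' : MemLp g' ∞ mu01)
    (hg : ∀ t ∈ Icc (0 : ℝ) 1, g t = ∫ s in Ioc (0 : ℝ) t, g' s) :
    1 ≤ eLpNorm (fun t : ℝ => (t : ℂ) * g' t + g t - 1) ∞ mu01 := by
  set M := (eLpNorm g' ∞ mu01).toReal
  have hM := hg'.ae_norm_le_toReal_eLpNorm_top
  have hlower : ∀ᵐ t : ℝ ∂mu01, 1 - 2 * M * t ≤ ‖(t : ℂ) * g' t + g t - 1‖ := by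
    filter_upwards [hM, ae_restrict_mem measurableSet_Icc] with t hg't ht
    have hsmall : ‖(t : ℂ) * g' t + g t‖ ≤ 2 * M * t := calc
      _ ≤ t * M + M * t := by
        refine norm_add_le_of_le ?_ (hg t ht ▸ norm_integral_Ioc_le_mul hM ht)
        rw [norm_mul, Complex.norm_real, Real.norm_of_nonneg ht.1]
        gcongr
        exact ht.1
      _ = 2 * M * t := by ring
    have := norm_sub_norm_le (1 : ℂ) ((t : ℂ) * g' t + g t)
    rw [norm_one, norm_sub_rev] at this
    linarith
  simpa using ofReal_le_eLpNorm_top_mu01 hlower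

/-- Let `ι ∈ AC_∞` be `ι t = t`.  For every `g ∈ AC_∞`
(with derivative `g' ∈ L^∞[0,1]`), the derivative of `ι g − ι` is
`t ↦ t g'(t) + g(t) − 1`, and
`|||ι g − ι||| = ess sup_{t ∈ [0,1]} |t g'(t) + g(t) − 1| ≥ 1`.
Consequently `AC_∞` has no (sequential) approximate identity. -/
theorem ACinfty_no_approximate_identity :
    (∀ g g' : ℝ → ℂ,
      MemLp g' ∞ mu01 →
      (∀ t ∈ Set.Icc (0 : ℝ) 1, g t = ∫ s in Set.Ioc (0 : ℝ) t, g' s) →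
      1 ≤ eLpNorm (fun t : ℝ => (t : ℂ) * g' t + g t - 1) ∞ mu01) ∧
    ¬ ∃ e e' : ℕ → ℝ → ℂ,
      (∀ n, MemLp (e' n) ∞ mu01 ∧
        ∀ t ∈ Set.Icc (0 : ℝ) 1, e n t = ∫ s in Set.Ioc (0 : ℝ) t, e' n s) ∧
      (∀ f f' : ℝ → ℂ,
        MemLp f' ∞ mu01 →
        (∀ t ∈ Set.Icc (0 : ℝ) 1, f t = ∫ s in Set.Ioc (0 : ℝ) t, f' s) →
        Tendsto (fun n =>
            eLpNorm (fun t => e' n t * f t + e n t * f' t - f' t) ∞ mu01)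
          atTop (𝓝 0)) := by
  refine ⟨one_le_eLpNorm_deriv_id_mul_sub_id, ?_⟩
  rintro ⟨e, e', he, htendsto⟩
  have hid := htendsto (fun t => (t : ℂ)) (fun _ => 1) (memLp_top_const 1)
    fun t ht => by simp [ht.1]
  have hone : ∀ n, (1 : ℝ≥0∞) ≤
      eLpNorm (fun t : ℝ => e' n t * (t : ℂ) + e n t * 1 - 1) ∞ mu01 := fun n => by
    convert one_le_eLpNorm_deriv_id_mul_sub_id (e n) (e' n) (he n).1 (he n).2 using 3 with t
    ring
  exact absurd (ge_of_tendsto' hid hone) (by simp)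
end

section
/- For 1 ≤ p ≤ ∞, let f ∈ AC_p satisfy inf_{t ∈ [0,1]} |1 − f(t)| > 0. Then the function g := f/(f − 1) belongs to AC_p (its derivative is −f'/(f−1)² ∈ L^p[0,1]) and satisfies f(t) + g(t) − f(t)g(t) = 0 for all t ∈ [0,1]; that is, f is quasiregular in AC_p. -/
/-!
Write `Φ z = z / (z - 1) = 1 + 1 / (z - 1)`. On `{z | a ≤ ‖z - 1‖}` the map `Φ` is Lipschitz
with constant `a⁻²`, so `Φ ∘ f` is absolutely continuous along with `f`; wherever `f` has
derivative `f'` (almost everywhere, by Lebesgue differentiation) the chain rule gives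
`(Φ ∘ f)' = -f' / (f - 1)²`. The fundamental theorem of calculus for absolutely continuous
functions then makes `Φ ∘ f` the primitive of `-f' / (f - 1)²`, and the bound
`‖f' / (f - 1)²‖ ≤ a⁻² ‖f'‖` puts this derivative in `L^p`.
-/

open MeasureTheory Set
open scoped ENNReal NNReal

open Filter

theorem AbsolutelyContinuousOnInterval.of_dist_le_mul {X Y : Type*} [PseudoMetricSpace X]
    [PseudoMetricSpace Y] {f : ℝ → X} {g : ℝ → Y} {a b : ℝ}
    (hf : AbsolutelyContinuousOnInterval f a b) (K : ℝ)
    (hgf : ∀ x ∈ uIcc a b, ∀ y ∈ uIcc a b, dist (g x) (g y) ≤ K * dist (f x) (f y)) :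
    AbsolutelyContinuousOnInterval g a b := by
  have hKf := Tendsto.const_mul K hf
  rw [mul_zero] at hKf
  refine squeeze_zero' (Eventually.of_forall fun E ↦ Finset.sum_nonneg fun _ _ ↦ dist_nonneg)
    ?_ hKf
  filter_upwards [eventually_inf_principal.mpr (Eventually.of_forall fun E hE ↦ hE)] with E hE
  rw [Finset.mul_sum]
  exact Finset.sum_le_sum fun i hi ↦ hgf _ (hE.1 i hi).1 _ (hE.1 i hi).2

section VectorValued

variable {E : Type*} [NormedAddCommGroup E] [NormedSpace ℝ E]

open intervalIntegral in
/-- Vector-valued version of `IntervalIntegrable.absolutelyContinuousOnInterval_intervalIntegral`,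
obtained by comparison with the primitive of `‖u‖`. -/
theorem IntervalIntegrable.absolutelyContinuousOnInterval_primitive {u : ℝ → E} {a b c : ℝ}
    (hu : IntervalIntegrable u volume a b) (hc : c ∈ uIcc a b) :
    AbsolutelyContinuousOnInterval (fun x ↦ ∫ v in c..x, u v) a b := by
  refine (hu.norm.absolutelyContinuousOnInterval_intervalIntegral hc).of_dist_le_mul 1
    fun x hx y hy ↦ ?_
  have hsub : ∀ z ∈ uIcc a b, uIcc c z ⊆ uIcc a b := fun z hz ↦ uIcc_subset_uIcc hc hz
  rw [one_mul, dist_eq_norm, dist_eq_norm, integral_interval_sub_left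
      (hu.mono_set (hsub x hx)) (hu.mono_set (hsub y hy)),
    integral_interval_sub_left (hu.norm.mono_set (hsub x hx)) (hu.norm.mono_set (hsub y hy)),
    Real.norm_eq_abs]
  exact norm_integral_le_abs_integral_norm

theorem AbsolutelyContinuousOnInterval.integral_eq_sub_of_ae_hasDerivAt [CompleteSpace E]
    {f f' : ℝ → E} {a b : ℝ} (hf : AbsolutelyContinuousOnInterval f a b)
    (hf' : IntervalIntegrable f' volume a b)
    (hderiv : ∀ᵐ x, x ∈ uIcc a b → HasDerivAt f (f' x) x) :
    ∫ x in a..b, f' x = f b - f a := by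
  have hdiff : AbsolutelyContinuousOnInterval (fun x ↦ f x - ∫ v in a..x, f' v) a b :=
    hf.fun_sub (hf'.absolutelyContinuousOnInterval_primitive left_mem_uIcc)
  obtain ⟨C, hC⟩ := hdiff.const_of_ae_hasDerivAt_zero <| by
    filter_upwards [hderiv, hf'.ae_hasDerivAt_integral] with x hfx hFx hx
    simpa using (hfx hx).fun_sub (hFx hx a left_mem_uIcc)
  have ha := hC a left_mem_uIcc
  have hb := hC b right_mem_uIcc
  simp only [intervalIntegral.integral_same, sub_zero] at ha
  rw [← ha] at hb
  rw [← hb, sub_sub_cancel]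

end VectorValued

section DivSubOne

variable {𝕜 : Type*} [RCLike 𝕜] {c : ℝ}

theorem norm_div_sub_one_sq_le (hc : 0 < c) {z : 𝕜} (hz : c ≤ ‖z - 1‖) (w : 𝕜) :
    ‖w / (z - 1) ^ 2‖ ≤ (c ^ 2)⁻¹ * ‖w‖ := by
  rw [norm_div, norm_pow, div_eq_inv_mul]
  gcongr

theorem dist_div_sub_one_le (hc : 0 < c) {z w : 𝕜} (hz : c ≤ ‖z - 1‖) (hw : c ≤ ‖w - 1‖) :
    dist (z / (z - 1)) (w / (w - 1)) ≤ (c ^ 2)⁻¹ * dist z w := by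
  have hz0 : z - 1 ≠ 0 := norm_pos_iff.mp (hc.trans_le hz)
  have hw0 : w - 1 ≠ 0 := norm_pos_iff.mp (hc.trans_le hw)
  have hdiff : z / (z - 1) - w / (w - 1) = (w - z) / ((z - 1) * (w - 1)) := by
    field_simp
    ring
  rw [dist_eq_norm, dist_eq_norm, hdiff, norm_div, norm_mul, norm_sub_rev, div_eq_inv_mul, sq]
  gcongr

theorem MeasureTheory.MemLp.neg_div_sub_one_sq {α : Type*} [TopologicalSpace α]
    [MeasurableSpace α] [OpensMeasurableSpace α] {f f' : α → 𝕜} {p : ℝ≥0∞} {μ : Measure α}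
    {s : Set α} (hf' : MemLp f' p (μ.restrict s)) (hf : ContinuousOn f s) (hs : MeasurableSet s)
    (hc : 0 < c) (hfc : ∀ x ∈ s, c ≤ ‖f x - 1‖) :
    MemLp (fun x ↦ -f' x / (f x - 1) ^ 2) p (μ.restrict s) := by
  refine hf'.of_le_mul (c := (c ^ 2)⁻¹) ?_ ?_
  · exact hf'.aestronglyMeasurable.neg.div₀
      (((hf.sub continuousOn_const).pow 2).aestronglyMeasurable hs)
  · filter_upwards [ae_restrict_mem hs] with x hx
    simpa using norm_div_sub_one_sq_le hc (hfc x hx) (-f' x)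

theorem AbsolutelyContinuousOnInterval.integral_neg_div_sub_one_sq {f f' : ℝ → 𝕜} {a b : ℝ}
    (hf : AbsolutelyContinuousOnInterval f a b) (hf' : IntervalIntegrable f' volume a b)
    (hderiv : ∀ᵐ x, x ∈ uIcc a b → HasDerivAt f (f' x) x)
    (hc : 0 < c) (hfc : ∀ x ∈ uIcc a b, c ≤ ‖f x - 1‖) :
    ∫ x in a..b, -f' x / (f x - 1) ^ 2 = f b / (f b - 1) - f a / (f a - 1) := by
  have hΦf : AbsolutelyContinuousOnInterval (fun x ↦ f x / (f x - 1)) a b :=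
    hf.of_dist_le_mul _ fun x hx y hy ↦ dist_div_sub_one_le hc (hfc x hx) (hfc y hy)
  have hint : IntervalIntegrable (fun x ↦ -f' x / (f x - 1) ^ 2) volume a b := by
    have hsub : uIoc a b ⊆ uIcc a b := uIoc_subset_uIcc
    have hmem := (memLp_one_iff_integrable.2 (intervalIntegrable_iff.1 hf')).neg_div_sub_one_sq
      (hf.continuousOn.mono hsub) measurableSet_uIoc hc fun x hx ↦ hfc x (hsub hx)
    exact intervalIntegrable_iff.2 (memLp_one_iff_integrable.1 hmem)
  refine hΦf.integral_eq_sub_of_ae_hasDerivAt hint ?_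
  filter_upwards [hderiv] with x hx hxab
  have hx0 : f x - 1 ≠ 0 := norm_pos_iff.mp (hc.trans_le (hfc x hxab))
  have hdiv := (hx hxab).fun_div ((hx hxab).sub_const 1) hx0
  rwa [show f' x * (f x - 1) - f x * f' x = -f' x by ring] at hdiv

theorem IntervalIntegrable.integral_neg_div_sub_one_sq {u : ℝ → 𝕜} {a b : ℝ}
    (hu : IntervalIntegrable u volume a b) (hc : 0 < c)
    (hc_le : ∀ x ∈ uIcc a b, c ≤ ‖(∫ v in a..x, u v) - 1‖) :
    ∫ x in a..b, -u x / ((∫ v in a..x, u v) - 1) ^ 2 =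
      (∫ v in a..b, u v) / ((∫ v in a..b, u v) - 1) := by
  rw [(hu.absolutelyContinuousOnInterval_primitive left_mem_uIcc).integral_neg_div_sub_one_sq hu
    ?_ hc hc_le]
  · simp
  · filter_upwards [hu.ae_hasDerivAt_integral] with x hx hxab using hx hxab a left_mem_uIcc

end DivSubOne

/-- For `1 ≤ p ≤ ∞`, let `f ∈ AC_p` (with derivative
`f' ∈ L^p[0,1]`) satisfy `inf_{t ∈ [0,1]} |1 − f t| > 0`.  Then
`g := f/(f − 1)` belongs to `AC_p`, with derivative `−f'/(f−1)² ∈ L^p[0,1]`,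
and `f + g − f g = 0` on `[0,1]`; i.e. `f` is quasiregular in `AC_p`. -/
theorem ACp_quasiregular
    (p : ℝ≥0∞) (hp : 1 ≤ p)
    (f f' : ℝ → ℂ)
    (hf' : MemLp f' p mu01)
    (hf : ∀ t ∈ Set.Icc (0 : ℝ) 1, f t = ∫ s in Set.Ioc (0 : ℝ) t, f' s)
    (hinf : ∃ a : ℝ, 0 < a ∧ ∀ t ∈ Set.Icc (0 : ℝ) 1, a ≤ ‖1 - f t‖) :
    MemLp (fun t => -f' t / (f t - 1) ^ 2) p mu01 ∧
    (∀ t ∈ Set.Icc (0 : ℝ) 1,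
      f t / (f t - 1) = ∫ s in Set.Ioc (0 : ℝ) t, -f' s / (f s - 1) ^ 2) ∧
    (∀ t ∈ Set.Icc (0 : ℝ) 1,
      f t + f t / (f t - 1) - f t * (f t / (f t - 1)) = 0) := by
  obtain ⟨a, ha, hfa⟩ := hinf
  have hfa' : ∀ t ∈ Icc (0 : ℝ) 1, a ≤ ‖f t - 1‖ := fun t ht ↦ norm_sub_rev (f t) 1 ▸ hfa t ht
  have : IsFiniteMeasure mu01 := isFiniteMeasure_restrict.2 measure_Icc_lt_top.ne
  have hint : IntervalIntegrable f' volume 0 1 :=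
    (intervalIntegrable_iff_integrableOn_Icc_of_le zero_le_one).2 (hf'.integrable hp)
  have hf_eq : ∀ t ∈ Icc (0 : ℝ) 1, f t = ∫ s in (0 : ℝ)..t, f' s := fun t ht ↦ by
    rw [hf t ht, intervalIntegral.integral_of_le ht.1]
  have h01 : uIcc (0 : ℝ) 1 = Icc 0 1 := uIcc_of_le zero_le_one
  have hf_cont : ContinuousOn f (Icc 0 1) := h01 ▸
    (hint.absolutelyContinuousOnInterval_primitive left_mem_uIcc).continuousOn.congr
      fun t ht ↦ hf_eq t (h01 ▸ ht)
  refine ⟨hf'.neg_div_sub_one_sq hf_cont measurableSet_Icc ha hfa', fun t ht ↦ ?_, fun t ht ↦ ?_⟩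
  · have hsub : ∀ x ∈ uIcc 0 t, x ∈ Icc (0 : ℝ) 1 := fun x hx ↦ by
      rw [uIcc_of_le ht.1] at hx
      exact ⟨hx.1, hx.2.trans ht.2⟩
    have hFTC := (hint.mono_set (uIcc_subset_uIcc left_mem_uIcc (h01 ▸ ht)))
      |>.integral_neg_div_sub_one_sq ha fun x hx ↦ hf_eq x (hsub x hx) ▸ hfa' x (hsub x hx)
    rw [hf_eq t ht, ← hFTC, intervalIntegral.integral_of_le ht.1]
    refine setIntegral_congr_fun measurableSet_Ioc fun x hx ↦ ?_
    rw [hf_eq x ⟨hx.1.le, hx.2.trans ht.2⟩]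
  · have hne : f t - 1 ≠ 0 := norm_pos_iff.mp (ha.trans_le (hfa' t ht))
    field_simp
    ring
end

section
/- For 1 ≤ p ≤ ∞, let φ : AC_p → ℂ be a nonzero map that is ℂ-linear, multiplicative (φ(fh) = φ(f)φ(h) for all f, h ∈ AC_p), and continuous with respect to the norm |||·|||. Then there exists t₀ ∈ (0,1] such that φ(f) = f(t₀) for every f ∈ AC_p. In particular, the maximal ideal space of AC_p is identified with (0,1] via point evaluations. -/
/-!
A continuous character `φ` of `AC_p` is dominated by the sup norm. Indeed
`(f ^ (n + 1))' = (n + 1) f ^ n f'`, so continuity gives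
`‖φ f‖ ^ (n + 1) ≤ C (n + 1) ‖f‖_∞ ^ n ‖f'‖_p`, and letting `n → ∞` yields `‖φ f‖ ≤ ‖f‖_∞`.

Let `x(t) = t` on `[0, 1]` and `z = φ x`. Multiplicativity gives `φ (x Q(x)) = z Q(z)` for every
polynomial `Q`, hence `‖z Q(z)‖ ≤ sup_{t ∈ [0,1]} ‖t Q(t)‖`. If `z ∉ [0, 1]`, Weierstrass
approximations `t Q(t) ≈ t / (t - z)` make `(t - z) t Q(t) - t` uniformly small while its value at
`z` is `-z`, forcing `z = 0`; so `z = t₀ ∈ [0, 1]`. Approximating an arbitrary `f ∈ AC_p`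
uniformly by such `t Q(t)` then gives `φ f = f t₀`, and `t₀ ≠ 0` because `φ ≠ 0` while
`f 0 = 0`.
-/

open MeasureTheory Set
open scoped ENNReal NNReal

/-- `AC_p`: the algebra of absolutely continuous functions `f` on `[0,1]` with
`f 0 = 0` and `f' ∈ L^p[0,1]`, realised as functions on `ℝ` that are given by
`f t = ∫₀^{min t 1} g` for some `g ∈ L^p[0,1]` (so `f = 0` on `(-∞,0]` and `f`
is constant on `[1,∞)`).  It is closed under pointwise addition, scalar
multiplication and multiplication. -/
def ACp (p : ℝ≥0∞) : Set (ℝ → ℂ) :=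
  {f | ∃ g : ℝ → ℂ, MemLp g p mu01 ∧
        ∀ t : ℝ, f t = ∫ s in Set.Ioc (0 : ℝ) (min t 1), g s}

open Filter Topology Polynomial

theorem integral_mul_integral_eq_integral_Iio_add_integral_Iic {μ : Measure ℝ} [SFinite μ]
    {g k : ℝ → ℂ} (hg : Integrable g μ) (hk : Integrable k μ) :
    (∫ x, g x ∂μ) * (∫ y, k y ∂μ) =
      ∫ y, (∫ x in Iio y, g x ∂μ) * k y ∂μ + ∫ x, g x * ∫ y in Iic x, k y ∂μ ∂μ := by
  set S : Set (ℝ × ℝ) := {z | z.1 < z.2}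
  have hS : MeasurableSet S := measurableSet_lt measurable_fst measurable_snd
  have hF := hg.mul_prod hk
  rw [← integral_prod_mul, ← integral_add_compl hS hF, ← integral_indicator hS,
    ← integral_indicator hS.compl, integral_prod_symm _ (hF.indicator hS),
    integral_prod _ (hF.indicator hS.compl)]
  congr 1
  · refine integral_congr_ae (ae_of_all _ fun y => ?_)
    dsimp only
    rw [← integral_mul_const, ← integral_indicator measurableSet_Iio]
    congr 1 with x
  · refine integral_congr_ae (ae_of_all _ fun x => ?_)
    dsimp only
    rw [← integral_const_mul, ← integral_indicator measurableSet_Iic]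
    congr 1 with y
    simp only [S, indicator, mem_compl_iff, mem_ofPred_eq, not_lt, mem_Iic]

lemma eval_map_ofReal (P : ℝ[X]) (t : ℝ) :
    (P.map Complex.ofRealHom).eval (t : ℂ) = ((P.eval t : ℝ) : ℂ) := by
  rw [eval_map]; exact eval₂_hom Complex.ofRealHom t

theorem exists_complex_polynomial_near_of_continuousOn (a b : ℝ) (h : ℝ → ℂ)
    (hh : ContinuousOn h (Icc a b)) {ε : ℝ} (hε : 0 < ε) :
    ∃ P : ℂ[X], ∀ t ∈ Icc a b, ‖P.eval (t : ℂ) - h t‖ < ε := by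
  obtain ⟨P₁, hP₁⟩ := exists_polynomial_near_of_continuousOn a b (fun t => (h t).re)
    (Complex.continuous_re.comp_continuousOn hh) (ε / 2) (half_pos hε)
  obtain ⟨P₂, hP₂⟩ := exists_polynomial_near_of_continuousOn a b (fun t => (h t).im)
    (Complex.continuous_im.comp_continuousOn hh) (ε / 2) (half_pos hε)
  refine ⟨P₁.map Complex.ofRealHom + C Complex.I * P₂.map Complex.ofRealHom, fun t ht => ?_⟩
  calc _ ≤ |P₁.eval t - (h t).re| + |P₂.eval t - (h t).im| := by
        refine (Complex.norm_le_abs_re_add_abs_im _).trans_eq ?_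
        simp [eval_map_ofReal]
    _ < ε / 2 + ε / 2 := add_lt_add (hP₁ t ht) (hP₂ t ht)
    _ = ε := add_halves ε

theorem exists_X_mul_polynomial_near_of_continuousOn (b : ℝ) (h : ℝ → ℂ)
    (hh : ContinuousOn h (Icc 0 b)) (h0 : h 0 = 0) {ε : ℝ} (hε : 0 < ε) :
    ∃ Q : ℂ[X], ∀ t ∈ Icc 0 b, ‖(X * Q).eval (t : ℂ) - h t‖ < ε := by
  rcases lt_or_ge b 0 with hb | hb
  · exact ⟨0, fun t ht => absurd (ht.1.trans ht.2) (not_le.2 hb)⟩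
  obtain ⟨P, hP⟩ := exists_complex_polynomial_near_of_continuousOn 0 b h hh (half_pos hε)
  refine ⟨P.divX, fun t ht => ?_⟩
  have hP0 : ‖P.coeff 0‖ < ε / 2 := by
    simpa [coeff_zero_eq_eval_zero, h0] using hP 0 ⟨le_rfl, hb⟩
  have hsplit : (X * P.divX).eval (t : ℂ) = P.eval (t : ℂ) - P.coeff 0 := by
    have hdivX := congrArg (eval (t : ℂ)) (divX_mul_X_add P)
    rw [eval_add, eval_mul, eval_X, eval_C] at hdivX
    rw [eval_mul, eval_X]
    linear_combination hdivX
  calc _ = ‖(P.eval (t : ℂ) - h t) - P.coeff 0‖ := by rw [hsplit, sub_right_comm]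
    _ ≤ ‖P.eval (t : ℂ) - h t‖ + ‖P.coeff 0‖ := norm_sub_le _ _
    _ < ε / 2 + ε / 2 := add_lt_add (hP t ht) hP0
    _ = ε := add_halves ε

theorem le_of_forall_pow_succ_le_mul {a M K : ℝ} (hM : 0 ≤ M)
    (h : ∀ n : ℕ, a ^ (n + 1) ≤ K * ((n + 1) * M ^ n)) : a ≤ M := by
  by_contra! hMa
  have ha0 : 0 < a := hM.trans_lt hMa
  set r := M / a
  have hr : r < 1 := (div_lt_one ha0).2 hMa
  have hbound : ∀ n : ℕ, a ≤ K * ((n + 1) * r ^ n) := fun n => by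
    have hpow : M ^ n = r ^ n * a ^ n := by rw [← mul_pow, div_mul_cancel₀ M ha0.ne']
    refine le_of_mul_le_mul_right ?_ (pow_pos ha0 n)
    calc a * a ^ n = a ^ (n + 1) := (pow_succ' a n).symm
      _ ≤ K * ((n + 1) * M ^ n) := h n
      _ = K * ((n + 1) * r ^ n) * a ^ n := by rw [hpow]; ring
  have hlim : Tendsto (fun n : ℕ => K * ((n + 1) * r ^ n)) atTop (𝓝 0) := by
    have := ((tendsto_self_mul_const_pow_of_lt_one (by positivity) hr).add
      (tendsto_pow_atTop_nhds_zero_of_lt_one (by positivity) hr)).const_mul K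
    simpa [add_mul] using this
  linarith [ge_of_tendsto' hlim hbound]

namespace ACp

noncomputable def primitive (g : ℝ → ℂ) (t : ℝ) : ℂ := ∫ s in Ioc (0 : ℝ) (min t 1), g s

instance : IsProbabilityMeasure mu01 :=
  ⟨by rw [mu01, Measure.restrict_apply_univ, Real.volume_Icc]; norm_num⟩

lemma Ioc_zero_min_subset (t : ℝ) : Ioc (0 : ℝ) (min t 1) ⊆ Icc 0 1 :=
  fun _ hs => ⟨hs.1.le, hs.2.trans (min_le_right _ _)⟩

lemma Ioc_zero_min_projIcc (t : ℝ) :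
    Ioc (0 : ℝ) (min (projIcc 0 1 zero_le_one t : ℝ) 1) = Ioc 0 (min t 1) := by
  rw [coe_projIcc]
  rcases le_total t 0 with ht | ht
  · rw [min_eq_right (ht.trans zero_le_one), max_eq_left ht, min_eq_left zero_le_one,
      Ioc_self, Ioc_eq_empty (not_lt.2 (min_le_of_left_le ht))]
  · rw [max_eq_right (le_min zero_le_one ht), min_eq_left (min_le_left _ _), min_comm]

variable {g k : ℝ → ℂ}

lemma primitive_projIcc (g : ℝ → ℂ) (t : ℝ) :
    primitive g (projIcc 0 1 zero_le_one t) = primitive g t := by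
  rw [primitive, primitive, Ioc_zero_min_projIcc]

lemma primitive_eq_intervalIntegral {t : ℝ} (ht : t ∈ Icc (0 : ℝ) 1) :
    primitive g t = ∫ s in 0..t, g s := by
  rw [primitive, min_eq_left ht.2, intervalIntegral.integral_of_le ht.1]

lemma continuous_primitive (hg : Integrable g mu01) : Continuous (primitive g) := by
  have hon : ContinuousOn (primitive g) (Icc 0 1) := by
    have := intervalIntegral.continuousOn_primitive_interval (μ := volume) (a := (0 : ℝ))
      (b := 1) (f := g) (by rwa [uIcc_of_le zero_le_one])
    rw [uIcc_of_le zero_le_one] at this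
    exact this.congr fun t ht => primitive_eq_intervalIntegral ht
  have hproj : Continuous fun t => (projIcc (0 : ℝ) 1 zero_le_one t : ℝ) :=
    continuous_subtype_val.comp continuous_projIcc
  convert hon.comp_continuous hproj fun t => (projIcc 0 1 zero_le_one t).2 using 1
  exact funext fun t => (primitive_projIcc g t).symm

lemma norm_primitive_le (hg : Integrable g mu01) (t : ℝ) :
    ‖primitive g t‖ ≤ ∫ s, ‖g s‖ ∂mu01 :=
  (norm_integral_le_integral_norm _).trans <| setIntegral_mono_set hg.norm
    (ae_of_all _ fun _ => norm_nonneg _) (Ioc_zero_min_subset t).eventuallyLE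

lemma primitive_zero (g : ℝ → ℂ) : primitive g 0 = 0 := by
  rw [primitive, min_eq_left zero_le_one, Ioc_self, Measure.restrict_empty, integral_zero_measure]

lemma primitive_one (t : ℝ) : primitive 1 t = (projIcc 0 1 zero_le_one t : ℝ) := by
  rw [primitive, Pi.one_def, setIntegral_const, Real.volume_real_Ioc, coe_projIcc,
    Complex.real_smul, mul_one, sub_zero, max_comm, min_comm]

lemma integrableOn_Ioc_zero_min (hg : Integrable g mu01) (t : ℝ) :
    IntegrableOn g (Ioc 0 (min t 1)) :=
  IntegrableOn.mono_set hg (Ioc_zero_min_subset t)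

lemma integrable_continuous_mul {q : ℝ → ℂ} (hq : Continuous q) (hg : Integrable g mu01) :
    Integrable (fun s => q s * g s) mu01 :=
  IntegrableOn.continuousOn_mul hq.continuousOn hg isCompact_Icc

lemma primitive_eq_setIntegral_Ioc {y : ℝ} (hy : y ≤ 1) :
    primitive g y = ∫ x in Ioc 0 y, g x := by
  rw [primitive, min_eq_left hy]

theorem primitive_mul_primitive (hg : Integrable g mu01) (hk : Integrable k mu01) :
    primitive g * primitive k = primitive (primitive g * k + primitive k * g) := by
  ext t
  have hm : min t 1 ≤ 1 := min_le_right _ _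
  have hgk := integrableOn_Ioc_zero_min (integrable_continuous_mul (continuous_primitive hg) hk) t
  have hkg := integrableOn_Ioc_zero_min (integrable_continuous_mul (continuous_primitive hk) hg) t
  rw [Pi.mul_apply, primitive, primitive, integral_mul_integral_eq_integral_Iio_add_integral_Iic
    (integrableOn_Ioc_zero_min hg t) (integrableOn_Ioc_zero_min hk t), primitive]
  simp only [Pi.add_apply, Pi.mul_apply]
  rw [integral_add hgk hkg]
  congr 1 <;> refine setIntegral_congr_fun measurableSet_Ioc fun y hy => ?_
  · have hIio : Iio y ∩ Ioc 0 (min t 1) = Ioo 0 y := by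
      ext x
      simp only [mem_inter_iff, mem_Iio, mem_Ioc, mem_Ioo]
      exact ⟨fun h => ⟨h.2.1, h.1⟩, fun h => ⟨h.2, h.1, h.2.le.trans hy.2⟩⟩
    rw [Measure.restrict_restrict' measurableSet_Ioc, hIio, ← integral_Ioc_eq_integral_Ioo,
      primitive_eq_setIntegral_Ioc (hy.2.trans hm)]
  · rw [Measure.restrict_restrict' measurableSet_Ioc, Iic_inter_Ioc_of_le hy.2,
      primitive_eq_setIntegral_Ioc (hy.2.trans hm), mul_comm]

theorem primitive_pow_succ (hg : Integrable g mu01) (n : ℕ) :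
    primitive g ^ (n + 1) = primitive fun s => ((n : ℂ) + 1) * primitive g s ^ n * g s := by
  induction n with
  | zero => simp
  | succ n ih =>
    have hint : Integrable (fun s => ((n : ℂ) + 1) * primitive g s ^ n * g s) mu01 := by
      simpa only [mul_assoc] using integrable_continuous_mul
        (q := fun s => ((n : ℂ) + 1) * primitive g s ^ n)
        (continuous_const.mul ((continuous_primitive hg).pow n)) hg
    rw [pow_succ', ih, primitive_mul_primitive hg hint, ← ih]
    congr 1 with s
    simp only [Pi.add_apply, Pi.mul_apply, Pi.pow_apply]
    push_cast
    ring

variable {p : ℝ≥0∞} {f h : ℝ → ℂ}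

lemma mem_iff : f ∈ ACp p ↔ ∃ g, MemLp g p mu01 ∧ f = primitive g :=
  exists_congr fun _ => and_congr_right fun _ => funext_iff.symm

lemma primitive_mem (hg : MemLp g p mu01) : primitive g ∈ ACp p := ⟨g, hg, fun _ => rfl⟩

lemma add_mem (hp : 1 ≤ p) (hf : f ∈ ACp p) (hh : h ∈ ACp p) : f + h ∈ ACp p := by
  obtain ⟨g, hg, rfl⟩ := mem_iff.1 hf
  obtain ⟨k, hk, rfl⟩ := mem_iff.1 hh
  refine ⟨g + k, hg.add hk, fun t => ?_⟩
  exact (integral_add (integrableOn_Ioc_zero_min (hg.integrable hp) t)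
    (integrableOn_Ioc_zero_min (hk.integrable hp) t)).symm

lemma smul_mem (c : ℂ) (hf : f ∈ ACp p) : c • f ∈ ACp p := by
  obtain ⟨g, hg, rfl⟩ := mem_iff.1 hf
  exact ⟨c • g, hg.const_smul c, fun t => (integral_smul c g).symm⟩

lemma primitive_one_mem : primitive 1 ∈ ACp p := primitive_mem (memLp_const 1)

lemma continuous_of_mem (hp : 1 ≤ p) (hf : f ∈ ACp p) : Continuous f := by
  obtain ⟨g, hg, rfl⟩ := mem_iff.1 hf
  exact continuous_primitive (hg.integrable hp)

lemma apply_zero_of_mem (hf : f ∈ ACp p) : f 0 = 0 := by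
  obtain ⟨g, -, rfl⟩ := mem_iff.1 hf
  exact primitive_zero g

lemma apply_projIcc_of_mem (hf : f ∈ ACp p) (t : ℝ) : f (projIcc 0 1 zero_le_one t) = f t := by
  obtain ⟨g, -, rfl⟩ := mem_iff.1 hf
  exact primitive_projIcc g t

lemma sub_mem (hp : 1 ≤ p) (hf : f ∈ ACp p) (hh : h ∈ ACp p) : f - h ∈ ACp p := by
  simpa [sub_eq_add_neg] using add_mem hp hf (smul_mem (-1) hh)

theorem exists_pow_succ_eq_primitive (hp : 1 ≤ p) (hg : MemLp g p mu01) {M : ℝ}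
    (hM : ∀ t, ‖primitive g t‖ ≤ M) (n : ℕ) :
    ∃ g', MemLp g' p mu01 ∧ primitive g ^ (n + 1) = primitive g' ∧
      eLpNorm g' p mu01 ≤ ENNReal.ofReal ((n + 1) * M ^ n) * eLpNorm g p mu01 := by
  have hbound : ∀ s, ‖((n : ℂ) + 1) * primitive g s ^ n * g s‖ ≤ (n + 1) * M ^ n * ‖g s‖ := by
    intro s
    rw [norm_mul, norm_mul, norm_pow]
    have hn : ‖(n : ℂ) + 1‖ = n + 1 := by
      rw [← Nat.cast_add_one, Complex.norm_natCast, Nat.cast_add_one]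
    rw [hn]
    gcongr
    exact hM s
  have hint := hg.integrable hp
  have hmeas : AEStronglyMeasurable (fun s => ((n : ℂ) + 1) * primitive g s ^ n * g s) mu01 :=
    (continuous_const.mul ((continuous_primitive hint).pow n)).aestronglyMeasurable.mul hg.1
  exact ⟨_, hg.of_le_mul hmeas (ae_of_all _ hbound), primitive_pow_succ hint n,
    eLpNorm_le_mul_eLpNorm_of_ae_le_mul (ae_of_all _ hbound) p⟩

lemma pow_succ_mem (hp : 1 ≤ p) (hf : f ∈ ACp p) (n : ℕ) : f ^ (n + 1) ∈ ACp p := by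
  obtain ⟨g, hg, rfl⟩ := mem_iff.1 hf
  obtain ⟨g', hg', hpow, -⟩ :=
    exists_pow_succ_eq_primitive hp hg (norm_primitive_le (hg.integrable hp)) n
  exact hpow ▸ primitive_mem hg'

lemma eval_X_mul_monomial_comp (f : ℝ → ℂ) (n : ℕ) (a : ℂ) :
    (fun t => (X * monomial n a).eval (f t)) = a • f ^ (n + 1) := by
  ext t
  simp only [eval_mul, eval_X, eval_monomial, Pi.smul_apply, Pi.pow_apply, smul_eq_mul]
  ring

lemma eval_X_mul_comp_mem (hp : 1 ≤ p) (hf : f ∈ ACp p) (Q : ℂ[X]) :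
    (fun t => (X * Q).eval (f t)) ∈ ACp p := by
  induction Q using Polynomial.induction_on' with
  | add Q R hQ hR => simpa only [mul_add, eval_add, Pi.add_def] using add_mem hp hQ hR
  | monomial n a => simpa only [eval_X_mul_monomial_comp] using smul_mem a (pow_succ_mem hp hf n)

structure IsContinuousAlgHom (p : ℝ≥0∞) (φ : (ℝ → ℂ) → ℂ) : Prop where
  map_add : ∀ f ∈ ACp p, ∀ h ∈ ACp p, φ (f + h) = φ f + φ h
  map_smul : ∀ (c : ℂ), ∀ f ∈ ACp p, φ (c • f) = c * φ f
  map_mul : ∀ f ∈ ACp p, ∀ h ∈ ACp p, φ (f * h) = φ f * φ h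
  bounded : ∃ C : ℝ, ∀ f g : ℝ → ℂ, MemLp g p mu01 →
    (∀ t : ℝ, f t = ∫ s in Set.Ioc (0 : ℝ) (min t 1), g s) →
    ‖φ f‖ ≤ C * (eLpNorm g p mu01).toReal

namespace IsContinuousAlgHom

variable {φ : (ℝ → ℂ) → ℂ}

lemma map_sub (hφ : IsContinuousAlgHom p φ) (hp : 1 ≤ p) (hf : f ∈ ACp p) (hh : h ∈ ACp p) :
    φ (f - h) = φ f - φ h := by
  rw [eq_sub_iff_add_eq, ← hφ.map_add _ (sub_mem hp hf hh) _ hh, sub_add_cancel]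

lemma map_pow_succ (hφ : IsContinuousAlgHom p φ) (hp : 1 ≤ p) (hf : f ∈ ACp p) (n : ℕ) :
    φ (f ^ (n + 1)) = φ f ^ (n + 1) := by
  induction n with
  | zero => simp
  | succ n ih => rw [pow_succ', hφ.map_mul _ hf _ (pow_succ_mem hp hf n), ih, ← pow_succ']

theorem norm_le_of_forall_norm_le (hφ : IsContinuousAlgHom p φ) (hp : 1 ≤ p) (hf : f ∈ ACp p)
    {M : ℝ} (hM : ∀ t, ‖f t‖ ≤ M) : ‖φ f‖ ≤ M := by
  obtain ⟨g, hg, rfl⟩ := mem_iff.1 hf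
  obtain ⟨C, hC⟩ := hφ.bounded
  set D := (eLpNorm g p mu01).toReal
  have hM0 : 0 ≤ M := (norm_nonneg _).trans (hM 0)
  refine le_of_forall_pow_succ_le_mul (K := max C 0 * D) hM0 fun n => ?_
  obtain ⟨g', hg', hpow, hnorm⟩ := exists_pow_succ_eq_primitive hp hg hM n
  have hD : (eLpNorm g' p mu01).toReal ≤ (n + 1) * M ^ n * D := by
    have := ENNReal.toReal_mono (ENNReal.mul_ne_top ENNReal.ofReal_ne_top hg.eLpNorm_ne_top) hnorm
    rwa [ENNReal.toReal_mul, ENNReal.toReal_ofReal (by positivity)] at this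
  calc ‖φ (primitive g)‖ ^ (n + 1) = ‖φ (primitive g ^ (n + 1))‖ := by
        rw [hφ.map_pow_succ hp hf, norm_pow]
    _ ≤ max C 0 * (eLpNorm g' p mu01).toReal :=
        (hC _ g' hg' (congrFun hpow)).trans (by gcongr; exact le_max_left C 0)
    _ ≤ max C 0 * ((n + 1) * M ^ n * D) := by gcongr
    _ = max C 0 * D * ((n + 1) * M ^ n) := by ring

theorem map_eval_X_mul_comp (hφ : IsContinuousAlgHom p φ) (hp : 1 ≤ p) (hf : f ∈ ACp p)
    (Q : ℂ[X]) : φ (fun t => (X * Q).eval (f t)) = (X * Q).eval (φ f) := by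
  induction Q using Polynomial.induction_on' with
  | add Q R hQ hR =>
    have hsplit : (fun t => (X * (Q + R)).eval (f t)) =
        (fun t => (X * Q).eval (f t)) + fun t => (X * R).eval (f t) := by
      ext t
      simp only [mul_add, eval_add, Pi.add_apply]
    rw [hsplit, hφ.map_add _ (eval_X_mul_comp_mem hp hf Q) _ (eval_X_mul_comp_mem hp hf R), hQ, hR,
      mul_add, eval_add]
  | monomial n a =>
    rw [eval_X_mul_monomial_comp, hφ.map_smul _ _ (pow_succ_mem hp hf n), hφ.map_pow_succ hp hf]
    simp only [eval_mul, eval_X, eval_monomial]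
    ring

theorem norm_eval_le_of_forall_norm_eval_le (hφ : IsContinuousAlgHom p φ) (hp : 1 ≤ p)
    (Q : ℂ[X]) {M : ℝ} (hM : ∀ t ∈ Icc (0 : ℝ) 1, ‖(X * Q).eval (t : ℂ)‖ ≤ M) :
    ‖(X * Q).eval (φ (primitive 1))‖ ≤ M := by
  rw [← hφ.map_eval_X_mul_comp hp primitive_one_mem Q]
  refine hφ.norm_le_of_forall_norm_le hp (eval_X_mul_comp_mem hp primitive_one_mem Q) fun t => ?_
  rw [primitive_one]
  exact hM _ (projIcc 0 1 zero_le_one t).2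

theorem exists_map_primitive_one_eq (hφ : IsContinuousAlgHom p φ) (hp : 1 ≤ p) :
    ∃ t₀ ∈ Icc (0 : ℝ) 1, φ (primitive 1) = t₀ := by
  by_contra! hz
  set z := φ (primitive 1)
  have hspec : ∀ (Q : ℂ[X]) (M : ℝ), (∀ t ∈ Icc (0 : ℝ) 1, ‖(X * Q).eval (t : ℂ)‖ ≤ M) →
      ‖(X * Q).eval z‖ ≤ M := fun Q _ => hφ.norm_eval_le_of_forall_norm_eval_le hp Q
  have hden : ∀ t ∈ Icc (0 : ℝ) 1, (t : ℂ) - z ≠ 0 := fun t ht => sub_ne_zero.2 (hz t ht).symm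
  have hsmall : ∀ ε > 0, ‖z‖ ≤ (1 + ‖z‖) * ε := by
    intro ε hε
    obtain ⟨Q, hQ⟩ := exists_X_mul_polynomial_near_of_continuousOn 1 (fun t => (t : ℂ) / (t - z))
      (ContinuousOn.div (by fun_prop) (by fun_prop) hden) (by simp) hε
    have hbound := hspec ((X - C z) * Q - 1) ((1 + ‖z‖) * ε) fun t ht => by
      have hfactor : (X * ((X - C z) * Q - 1)).eval (t : ℂ) =
          (t - z) * ((X * Q).eval (t : ℂ) - t / (t - z)) := by
        simp only [eval_mul, eval_sub, eval_X, eval_C, eval_one]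
        field_simp [hden t ht]
      rw [hfactor, norm_mul]
      gcongr
      · refine (norm_sub_le _ _).trans (by gcongr; simpa [abs_of_nonneg ht.1] using ht.2)
      · exact (hQ t ht).le
    simpa using hbound
  have hz0 : ‖z‖ ≤ 0 := le_of_forall_pos_le_add fun ε hε => by
    simpa [mul_div_cancel₀ ε (by positivity : 1 + ‖z‖ ≠ 0)] using
      hsmall (ε / (1 + ‖z‖)) (by positivity)
  exact hz 0 ⟨le_rfl, zero_le_one⟩ (by simpa using hz0)

theorem map_eq_apply (hφ : IsContinuousAlgHom p φ) (hp : 1 ≤ p) {t₀ : ℝ}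
    (ht₀ : t₀ ∈ Icc (0 : ℝ) 1) (hz : φ (primitive 1) = t₀) (hf : f ∈ ACp p) : φ f = f t₀ := by
  refine eq_of_forall_dist_le fun ε hε => ?_
  obtain ⟨Q, hQ⟩ := exists_X_mul_polynomial_near_of_continuousOn 1 f
    (continuous_of_mem hp hf).continuousOn (apply_zero_of_mem hf) (half_pos hε)
  have hP := eval_X_mul_comp_mem hp primitive_one_mem Q
  have hclose : ‖φ f - (X * Q).eval (t₀ : ℂ)‖ ≤ ε / 2 := by
    rw [← hz, ← hφ.map_eval_X_mul_comp hp primitive_one_mem Q, ← hφ.map_sub hp hf hP]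
    refine hφ.norm_le_of_forall_norm_le hp (sub_mem hp hf hP) fun t => ?_
    rw [Pi.sub_apply, primitive_one, ← apply_projIcc_of_mem hf, norm_sub_rev]
    exact (hQ _ (projIcc 0 1 zero_le_one t).2).le
  calc dist (φ f) (f t₀) ≤ ‖φ f - (X * Q).eval (t₀ : ℂ)‖ + ‖(X * Q).eval (t₀ : ℂ) - f t₀‖ := by
        rw [dist_eq_norm]; exact norm_sub_le_norm_sub_add_norm_sub _ _ _
    _ ≤ ε / 2 + ε / 2 := add_le_add hclose (hQ t₀ ht₀).le
    _ = ε := add_halves ε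

end IsContinuousAlgHom

end ACp

/-- For `1 ≤ p ≤ ∞`, every nonzero `ℂ`-linear multiplicative
functional `φ` on `AC_p` that is continuous for the norm `|||f||| = ‖f'‖_p` is a
point evaluation at some `t₀ ∈ (0,1]`: the maximal ideal space of `AC_p` is
`(0,1]`. -/
theorem ACp_characters_are_point_evaluations
    (p : ℝ≥0∞) (hp : 1 ≤ p)
    (φ : (ℝ → ℂ) → ℂ)
    (hadd : ∀ f ∈ ACp p, ∀ h ∈ ACp p, φ (f + h) = φ f + φ h)
    (hsmul : ∀ (c : ℂ), ∀ f ∈ ACp p, φ (c • f) = c * φ f)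
    (hmul : ∀ f ∈ ACp p, ∀ h ∈ ACp p, φ (f * h) = φ f * φ h)
    (hcont : ∃ C : ℝ, ∀ f g : ℝ → ℂ, MemLp g p mu01 →
      (∀ t : ℝ, f t = ∫ s in Set.Ioc (0 : ℝ) (min t 1), g s) →
      ‖φ f‖ ≤ C * (eLpNorm g p mu01).toReal)
    (hne : ∃ f ∈ ACp p, φ f ≠ 0) :
    ∃ t₀ ∈ Set.Ioc (0 : ℝ) 1, ∀ f ∈ ACp p, φ f = f t₀ := by
  have hφ : ACp.IsContinuousAlgHom p φ := ⟨hadd, hsmul, hmul, hcont⟩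
  obtain ⟨t₀, ht₀, hz⟩ := hφ.exists_map_primitive_one_eq hp
  have hval : ∀ f ∈ ACp p, φ f = f t₀ := fun f hf => hφ.map_eq_apply hp ht₀ hz hf
  refine ⟨t₀, ⟨ht₀.1.lt_of_ne ?_, ht₀.2⟩, hval⟩
  rintro rfl
  obtain ⟨f, hf, hφf⟩ := hne
  exact hφf (by rw [hval f hf, ACp.apply_zero_of_mem hf])
end

section
/- Let 1 ≤ p ≤ ∞ and let m : (0,1] → ℂ be continuous and bounded. Suppose there exists N ≥ 0 such that for every g ∈ AC_p the product mg (extended by (mg)(0) = 0) belongs to AC_p and |||mg||| ≤ N |||g|||. Then for every α ∈ (0,1], there exists m' ∈ L^p[α,1] with m(t) = m(α) + ∫_α^t m'(s) ds for all t ∈ [α,1] (so m is absolutely continuous on [α,1]), and ‖m'·χ_{[α,1]}‖_p ≤ N·α^{−1/p'}, where α^{−1/p'} is interpreted as 1 when p = 1 and as 1/α when p = ∞. -/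
/-! Test the multiplier on `g t = min t α`, whose derivative is the indicator of `(0, α]`, of
`L^p` norm `α ^ (1/p)`. On `[α, 1]` the product `m g` is `α m`, so `m' := α⁻¹ D`, where `D` is the
derivative of `m g`, and `‖m'‖_p ≤ α⁻¹ N α ^ (1/p) = N α ^ (-1/p')`. -/

open MeasureTheory Set
open scoped ENNReal NNReal

lemma ENNReal.HolderConjugate.toReal_inv_eq_one_sub (p q : ℝ≥0∞) [HolderConjugate p q] :
    q⁻¹.toReal = 1 - 1 / p.toReal := by
  have hp : p⁻¹ ≤ 1 := by
    rw [← inv_add_inv_eq_one p q]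
    exact le_self_add
  rw [← one_sub_inv p q, ENNReal.toReal_sub_of_le hp one_ne_top, ENNReal.toReal_inv, one_div,
    ENNReal.toReal_one]

lemma Real.rpow_neg_one_sub_one_div {α : ℝ} (hα : 0 < α) (r : ℝ) :
    α ^ (-(1 - 1 / r)) = α⁻¹ * α ^ (1 / r) := by
  rw [neg_sub, Real.rpow_sub hα, Real.rpow_one, div_eq_inv_mul]

instance inst_s7 : IsFiniteMeasure mu01 := by
  rw [mu01]
  infer_instance

lemma mu01_restrict_of_subset {s : Set ℝ} (hs : s ⊆ Icc 0 1) (hms : MeasurableSet s) :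
    mu01.restrict s = volume.restrict s := by
  rw [mu01, Measure.restrict_restrict hms, inter_eq_left.mpr hs]

lemma mu01_Ioc_zero {a : ℝ} (ha : a ≤ 1) : mu01 (Ioc 0 a) = ENNReal.ofReal a := by
  rw [mu01, Measure.restrict_apply measurableSet_Ioc,
    inter_eq_left.mpr (Ioc_subset_Icc_self.trans (Icc_subset_Icc le_rfl ha)), Real.volume_Ioc,
    sub_zero]

lemma setIntegral_Ioc_indicator_const {E : Type*} [NormedAddCommGroup E] [NormedSpace ℝ E]
    [CompleteSpace E] (c : E) {a t : ℝ} (ha : 0 ≤ a) (ht : 0 ≤ t) :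
    ∫ s in Ioc 0 t, (Ioc 0 a).indicator (fun _ => c) s = min t a • c := by
  rw [setIntegral_indicator measurableSet_Ioc, Ioc_inter_Ioc, max_self, setIntegral_const,
    measureReal_def, Real.volume_Ioc, sub_zero, ENNReal.toReal_ofReal (le_min ht ha)]

lemma setIntegral_Ioc_sub_setIntegral_Ioc {E : Type*} [NormedAddCommGroup E] [NormedSpace ℝ E]
    {f : ℝ → E} {x a t : ℝ} (hf : IntegrableOn f (Ioc x t)) (hxa : x ≤ a) (hat : a ≤ t) :
    (∫ s in Ioc x t, f s) - ∫ s in Ioc x a, f s = ∫ s in Ioc a t, f s := by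
  rw [← Ioc_union_Ioc_eq_Ioc hxa hat, setIntegral_union (Ioc_disjoint_Ioc_of_le le_rfl)
    measurableSet_Ioc (hf.mono_set (Ioc_subset_Ioc_right hat))
    (hf.mono_set (Ioc_subset_Ioc_left hxa)), add_sub_cancel_left]

lemma eq_add_setIntegral_Ioc_of_mul_eq_setIntegral_Ioc {𝕜 : Type*} [RCLike 𝕜]
    {m D : ℝ → 𝕜} {c : 𝕜} {x a b : ℝ} (hc : c ≠ 0) (hD : IntegrableOn D (Ioc x b))
    (hxa : x ≤ a) (hm : ∀ t ∈ Icc a b, m t * c = ∫ s in Ioc x t, D s) :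
    ∀ t ∈ Icc a b, m t = m a + ∫ s in Ioc a t, c⁻¹ * D s := by
  intro t ht
  have hdiff : m t * c - m a * c = ∫ s in Ioc a t, D s := by
    rw [hm t ht, hm a ⟨le_rfl, ht.1.trans ht.2⟩,
      setIntegral_Ioc_sub_setIntegral_Ioc (hD.mono_set (Ioc_subset_Ioc_right ht.2)) hxa ht.1]
  rw [integral_const_mul, ← hdiff]
  field_simp
  ring

theorem multiplier_ACp_necessary_general
    (p q : ℝ≥0∞) (hpq : p⁻¹ + q⁻¹ = 1)
    (m : ℝ → ℂ)
    (N : ℝ) (hN : 0 ≤ N)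
    (hmult : ∀ g g' : ℝ → ℂ, MemLp g' p mu01 →
      (∀ t ∈ Set.Icc (0 : ℝ) 1, g t = ∫ s in Set.Ioc (0 : ℝ) t, g' s) →
      ∃ D : ℝ → ℂ, MemLp D p mu01 ∧
        (∀ t ∈ Set.Icc (0 : ℝ) 1,
          (if t = 0 then 0 else m t * g t) = ∫ s in Set.Ioc (0 : ℝ) t, D s) ∧
        eLpNorm D p mu01 ≤ ENNReal.ofReal N * eLpNorm g' p mu01) :
    ∀ α ∈ Set.Ioc (0 : ℝ) 1, ∃ m' : ℝ → ℂ,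
      MemLp m' p (volume.restrict (Set.Icc α 1)) ∧
      (∀ t ∈ Set.Icc α 1, m t = m α + ∫ s in Set.Ioc α t, m' s) ∧
      eLpNorm ((Set.Icc α 1).indicator m') p mu01 ≤
        ENNReal.ofReal (N * α ^ (-(q⁻¹).toReal)) := by
  have : ENNReal.HolderConjugate p q := ENNReal.holderConjugate_iff.mpr hpq
  rintro α ⟨hα0, hα1⟩
  set g' : ℝ → ℂ := (Ioc 0 α).indicator fun _ => 1
  obtain ⟨D, hD, hmD, hDg'⟩ := hmult (fun t => ((min t α : ℝ) : ℂ)) g'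
    (memLp_indicator_const p measurableSet_Ioc 1 (Or.inr (measure_ne_top _ _)))
    (fun t ht => by rw [setIntegral_Ioc_indicator_const _ hα0.le ht.1]; simp)
  have hmα : ∀ t ∈ Icc α 1, m t * α = ∫ s in Ioc 0 t, D s := fun t ht => by
    rw [← hmD t ⟨hα0.le.trans ht.1, ht.2⟩, if_neg (hα0.trans_le ht.1).ne', min_eq_right ht.1]
  have hDint : IntegrableOn D (Icc 0 1) := hD.integrable (ENNReal.HolderConjugate.one_le p q)
  refine ⟨fun s => (α : ℂ)⁻¹ * D s, ?_, ?_, ?_⟩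
  · rw [← mu01_restrict_of_subset (Icc_subset_Icc hα0.le le_rfl) measurableSet_Icc]
    exact (hD.restrict _).const_mul _
  · exact eq_add_setIntegral_Ioc_of_mul_eq_setIntegral_Ioc (by exact_mod_cast hα0.ne')
      (hDint.mono_set Ioc_subset_Icc_self) hα0.le hmα
  · have hg' : eLpNorm g' p mu01 ≤ ENNReal.ofReal α ^ (1 / p.toReal) := by
      refine (eLpNorm_indicator_const_le _ _).trans ?_
      simp [mu01_Ioc_zero hα1]
    calc eLpNorm ((Icc α 1).indicator fun s => (α : ℂ)⁻¹ * D s) p mu01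
        = ‖(α : ℂ)⁻¹‖ₑ * eLpNorm ((Icc α 1).indicator D) p mu01 := by
          rw [← eLpNorm_const_smul]
          congr 1
          ext s
          by_cases hs : s ∈ Icc α 1 <;> simp [hs]
      _ ≤ ENNReal.ofReal α⁻¹ * (ENNReal.ofReal N * ENNReal.ofReal α ^ (1 / p.toReal)) := by
          rw [← ofReal_norm, norm_inv, Complex.norm_of_nonneg hα0.le]
          gcongr
          exact (eLpNorm_indicator_le D).trans (hDg'.trans (by gcongr))
      _ = ENNReal.ofReal (N * α ^ (-(q⁻¹).toReal)) := by
          rw [ENNReal.HolderConjugate.toReal_inv_eq_one_sub p q, Real.rpow_neg_one_sub_one_div hα0,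
            ENNReal.ofReal_rpow_of_pos hα0, ← ENNReal.ofReal_mul hN,
            ← ENNReal.ofReal_mul (by positivity)]
          congr 1
          ring

/-- necessity, Theorem 3.  Let `1 ≤ p ≤ ∞` with conjugate
exponent `q` (`1/p + 1/q = 1`), and let `m` be continuous and bounded on `(0,1]`.
Suppose there is `N ≥ 0` such that for every `g ∈ AC_p` the product `mg`
(extended by `(mg)(0) = 0`) lies in `AC_p` with `|||mg||| ≤ N |||g|||`.  Then for
every `α ∈ (0,1]`, `m` is absolutely continuous on `[α,1]` with derivative
`m' ∈ L^p[α,1]` and `‖m'·χ_{[α,1]}‖_p ≤ N·α^{−1/p'}` (interpreted as `N` when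
`p = 1` and `N/α` when `p = ∞`). -/
theorem multiplier_ACp_necessary
    (p q : ℝ≥0∞) (hp : 1 ≤ p) (hpq : p⁻¹ + q⁻¹ = 1)
    (m : ℝ → ℂ)
    (hmc : ContinuousOn m (Set.Ioc (0 : ℝ) 1))
    (hmb : ∃ M : ℝ, ∀ t ∈ Set.Ioc (0 : ℝ) 1, ‖m t‖ ≤ M)
    (N : ℝ) (hN : 0 ≤ N)
    (hmult : ∀ g g' : ℝ → ℂ, MemLp g' p mu01 →
      (∀ t ∈ Set.Icc (0 : ℝ) 1, g t = ∫ s in Set.Ioc (0 : ℝ) t, g' s) →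
      ∃ D : ℝ → ℂ, MemLp D p mu01 ∧
        (∀ t ∈ Set.Icc (0 : ℝ) 1,
          (if t = 0 then 0 else m t * g t) = ∫ s in Set.Ioc (0 : ℝ) t, D s) ∧
        eLpNorm D p mu01 ≤ ENNReal.ofReal N * eLpNorm g' p mu01) :
    ∀ α ∈ Set.Ioc (0 : ℝ) 1, ∃ m' : ℝ → ℂ,
      MemLp m' p (volume.restrict (Set.Icc α 1)) ∧
      (∀ t ∈ Set.Icc α 1, m t = m α + ∫ s in Set.Ioc α t, m' s) ∧
      eLpNorm ((Set.Icc α 1).indicator m') p mu01 ≤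
        ENNReal.ofReal (N * α ^ (-(q⁻¹).toReal)) :=
  multiplier_ACp_necessary_general p q hpq m N hN hmult
end

section
/- Let m : (0,1] → ℂ be continuous and bounded. Then the following are equivalent: (i) there exists N ≥ 0 such that for every g ∈ AC_1 the product mg (extended by (mg)(0) = 0) belongs to AC_1 with |||mg||| ≤ N|||g|||; (ii) there exists h ∈ L¹[0,1] such that m(t) = m(1) − ∫_t^1 h(s) ds for all t ∈ (0,1], i.e., m extends to an absolutely continuous function on [0,1]. (This recovers Larsen's description of the multipliers of AC_1.) -/
open MeasureTheory Set
open scoped ENNReal NNReal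

/-!
Testing a multiplier `m` against the ramp `g t = min (t / a) 1`, whose derivative has `L¹`-norm
one, shows that on `[a, 1]` the function `m` is the primitive of some `D_a` with `‖D_a‖₁ ≤ N`.
By the Lebesgue differentiation theorem these densities agree almost everywhere where they
overlap, so they glue to a single `h` on `(0, 1]`, which is integrable because its integrals
over the intervals `[a, 1]` stay below `N`.

Conversely, if `m t = c + ∫₀ᵗ h`, the product rule `(m g)' = h g + m g'` (Fubini on the two
triangles of a square) together with `‖g‖_∞ ≤ ‖g'‖₁` and `‖m‖_∞ ≤ ‖c‖ + ‖h‖₁` bounds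
`‖(m g)'‖₁` by `(‖c‖ + 2 ‖h‖₁) ‖g'‖₁`.
-/

open Filter Topology

section Glue

variable {α β : Type*} [MeasurableSpace α] {μ : Measure α}

theorem exists_forall_ae_eq_restrict {S : ℕ → Set α} {f : ℕ → α → β}
    (hS : ∀ n, MeasurableSet (S n))
    (hcons : ∀ n k, n ≤ k → f n =ᵐ[μ.restrict (S n)] f k) :
    ∃ g : α → β, ∀ n, g =ᵐ[μ.restrict (S n)] f n := by
  classical
  have hgood : ∀ᵐ x ∂μ, ∀ n k, n ≤ k → x ∈ S n → f n x = f k x := by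
    simp only [ae_all_iff]
    exact fun n k hnk => (ae_restrict_iff' (hS n)).1 (hcons n k hnk)
  refine ⟨fun x => if hx : ∃ n, x ∈ S n then f (Nat.find hx) x else f 0 x, fun n => ?_⟩
  filter_upwards [ae_restrict_of_ae hgood, ae_restrict_mem (hS n)] with x hx hxn
  have hex : ∃ n, x ∈ S n := ⟨n, hxn⟩
  simp only [dif_pos hex]
  exact hx _ _ (Nat.find_min' hex hxn) (Nat.find_spec hex)

end Glue

section Interval

variable {E : Type*} [NormedAddCommGroup E] [NormedSpace ℝ E]

theorem integral_Ioc_add_integral_Ioc {f : ℝ → E} {a b c : ℝ} (hab : a ≤ b) (hbc : b ≤ c)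
    (hf : IntegrableOn f (Ioc a c)) :
    (∫ x in Ioc a b, f x) + ∫ x in Ioc b c, f x = ∫ x in Ioc a c, f x := by
  rw [← setIntegral_union (Ioc_disjoint_Ioc_of_le le_rfl) measurableSet_Ioc
    (hf.mono_set (Ioc_subset_Ioc_right hbc)) (hf.mono_set (Ioc_subset_Ioc_left hab)),
    Ioc_union_Ioc_eq_Ioc hab hbc]

theorem norm_integral_Ioc_le {f : ℝ → E} {a b t : ℝ} (hf : IntegrableOn f (Icc a b))
    (ht : t ≤ b) : ‖∫ x in Ioc a t, f x‖ ≤ ∫ x in Icc a b, ‖f x‖ :=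
  (norm_integral_le_integral_norm _).trans <| setIntegral_mono_set hf.norm
    (Eventually.of_forall fun _ => norm_nonneg _)
    (Eventually.of_forall <| Ioc_subset_Icc_self.trans (Icc_subset_Icc_right ht))

theorem continuousOn_integral_Ioc {f : ℝ → E} {a b : ℝ} (hf : IntegrableOn f (Icc a b)) :
    ContinuousOn (fun t => ∫ x in Ioc a t, f x) (Icc a b) := by
  rcases le_or_gt a b with hab | hab
  · have hprim := intervalIntegral.continuousOn_primitive_interval (a := a) (b := b)
      (by rwa [uIcc_of_le hab])
    rw [uIcc_of_le hab] at hprim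
    exact hprim.congr fun t ht => (intervalIntegral.integral_of_le ht.1).symm
  · simp [Icc_eq_empty_of_lt hab]

variable [CompleteSpace E]

theorem ae_eq_restrict_Ioc_of_forall_integral_eq {f g : ℝ → E} {c a b : ℝ} (hca : c ≤ a)
    (hf : IntegrableOn f (Ioc c b)) (hg : IntegrableOn g (Ioc c b))
    (h : ∀ t ∈ Ioo a b, ∫ x in Ioc c t, f x = ∫ x in Ioc c t, g x) :
    f =ᵐ[volume.restrict (Ioc a b)] g := by
  rcases le_or_gt c b with hcb | hbc
  swap
  · simp [Ioc_eq_empty (hbc.trans_le hca).not_gt, EventuallyEq]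
  rw [← Measure.restrict_congr_set Ioo_ae_eq_Ioc, EventuallyEq,
    ae_restrict_iff' measurableSet_Ioo]
  have hfi := (intervalIntegrable_iff_integrableOn_Ioc_of_le hcb).2 hf
  have hgi := (intervalIntegrable_iff_integrableOn_Ioc_of_le hcb).2 hg
  filter_upwards [hfi.ae_hasDerivAt_integral, hgi.ae_hasDerivAt_integral] with x hfx hgx hx
  have hxI : x ∈ uIcc c b := by rw [uIcc_of_le hcb]; exact ⟨hca.trans hx.1.le, hx.2.le⟩
  have hcI : c ∈ uIcc c b := left_mem_uIcc
  have hprim : (fun t => ∫ y in c..t, f y) =ᶠ[𝓝 x] fun t => ∫ y in c..t, g y := by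
    filter_upwards [Ioo_mem_nhds hx.1 hx.2] with t ht
    rw [intervalIntegral.integral_of_le (hca.trans ht.1.le),
      intervalIntegral.integral_of_le (hca.trans ht.1.le), h t ht]
  exact (hfx hxI c hcI).unique ((hgx hxI c hcI).congr_of_eventuallyEq hprim)

end Interval

theorem integral_Ioc_mul_integral_Ioc {𝕜 : Type*} [RCLike 𝕜] {f k : ℝ → 𝕜} {a b : ℝ}
    (hf : IntegrableOn f (Ioc a b)) (hk : IntegrableOn k (Ioc a b)) :
    (∫ x in Ioc a b, f x) * (∫ y in Ioc a b, k y) =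
      (∫ x in Ioc a b, f x * ∫ y in Ioc a x, k y) +
        ∫ y in Ioc a b, (∫ x in Ioc a y, f x) * k y := by
  set μ := volume.restrict (Ioc a b)
  set S : Set (ℝ × ℝ) := {p | p.2 ≤ p.1}
  have hS : MeasurableSet S := measurableSet_le measurable_snd measurable_fst
  have hF : Integrable (fun p : ℝ × ℝ => f p.1 * k p.2) (μ.prod μ) := hf.mul_prod hk
  have hlower : ∫ p in S, f p.1 * k p.2 ∂(μ.prod μ) =
      ∫ x in Ioc a b, f x * ∫ y in Ioc a x, k y := by
    rw [← integral_indicator hS, integral_prod _ (hF.indicator hS)]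
    refine setIntegral_congr_fun measurableSet_Ioc fun x hx => ?_
    have hslice : ∀ y, S.indicator (fun p : ℝ × ℝ => f p.1 * k p.2) (x, y) =
        (Iic x).indicator (fun y => f x * k y) y := fun y => by
      simp only [indicator_apply, S, mem_ofPred_eq, mem_Iic]
    simp only [hslice]
    rw [setIntegral_indicator measurableSet_Iic, Ioc_inter_Iic, inf_eq_right.2 hx.2,
      integral_const_mul]
  have hupper : ∫ p in Sᶜ, f p.1 * k p.2 ∂(μ.prod μ) =
      ∫ y in Ioc a b, (∫ x in Ioc a y, f x) * k y := by
    rw [← integral_indicator hS.compl, integral_prod_symm _ (hF.indicator hS.compl)]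
    refine setIntegral_congr_fun measurableSet_Ioc fun y hy => ?_
    have hslice : ∀ x, Sᶜ.indicator (fun p : ℝ × ℝ => f p.1 * k p.2) (x, y) =
        (Iio y).indicator (fun x => f x * k y) x := fun x => by
      simp only [indicator_apply, S, mem_compl_iff, mem_ofPred_eq, mem_Iio, not_le]
    simp only [hslice]
    rw [setIntegral_indicator measurableSet_Iio,
      setIntegral_congr_set ((ae_eq_refl _).inter Iio_ae_eq_Iic), Ioc_inter_Iic,
      inf_eq_right.2 hy.2, integral_mul_const]
  rw [← integral_prod_mul, ← integral_add_compl hS hF, hlower, hupper]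

theorem add_integral_Ioc_mul_integral_Ioc {𝕜 : Type*} [RCLike 𝕜] {f k : ℝ → 𝕜} {a b : ℝ}
    (c : 𝕜) (hf : IntegrableOn f (Icc a b)) (hk : IntegrableOn k (Icc a b)) :
    (c + ∫ x in Ioc a b, f x) * ∫ x in Ioc a b, k x =
      ∫ x in Ioc a b, ((f x * ∫ y in Ioc a x, k y) + (c + ∫ y in Ioc a x, f y) * k x) := by
  have hfK : IntegrableOn (fun x => f x * ∫ y in Ioc a x, k y) (Ioc a b) :=
    (hf.mul_continuousOn (continuousOn_integral_Ioc hk) isCompact_Icc).mono_set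
      Ioc_subset_Icc_self
  have hFk : IntegrableOn (fun x => (∫ y in Ioc a x, f y) * k x) (Ioc a b) :=
    (hk.continuousOn_mul (continuousOn_integral_Ioc hf) isCompact_Icc).mono_set
      Ioc_subset_Icc_self
  have hck : IntegrableOn (fun x => c * k x) (Ioc a b) :=
    (hk.mono_set Ioc_subset_Icc_self).const_mul c
  have hfKFk : IntegrableOn
      (fun x => (f x * ∫ y in Ioc a x, k y) + (∫ y in Ioc a x, f y) * k x) (Ioc a b) :=
    hfK.add hFk
  calc (c + ∫ x in Ioc a b, f x) * ∫ x in Ioc a b, k x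
      = (∫ x in Ioc a b, c * k x) + ((∫ x in Ioc a b, f x * ∫ y in Ioc a x, k y) +
          ∫ x in Ioc a b, (∫ y in Ioc a x, f y) * k x) := by
        rw [integral_const_mul, ← integral_Ioc_mul_integral_Ioc
          (hf.mono_set Ioc_subset_Icc_self) (hk.mono_set Ioc_subset_Icc_self)]
        ring
    _ = ∫ x in Ioc a b, ((f x * ∫ y in Ioc a x, k y) + (c + ∫ y in Ioc a x, f y) * k x) := by
        rw [← integral_add hfK hFk, ← integral_add hck hfKFk]
        refine setIntegral_congr_fun measurableSet_Ioc fun x _ => ?_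
        ring

theorem eLpNorm_one_eq_ofReal_integral_norm {α E : Type*} [MeasurableSpace α] {μ : Measure α}
    [NormedAddCommGroup E] {f : α → E} (hf : Integrable f μ) :
    eLpNorm f 1 μ = ENNReal.ofReal (∫ x, ‖f x‖ ∂μ) := by
  rw [eLpNorm_one_eq_lintegral_enorm, ofReal_integral_norm_eq_lintegral_enorm hf]

section Forward

variable {E : Type*} [NormedAddCommGroup E] [NormedSpace ℝ E] [CompleteSpace E]

theorem exists_integrableOn_eq_sub_integral_of_bounded_local_densities {m : ℝ → E} {N : ℝ}
    (hD : ∀ a ∈ Ioc (0 : ℝ) 1, ∃ D : ℝ → E, IntegrableOn D (Icc 0 1) ∧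
      ∫ s in Icc 0 1, ‖D s‖ ≤ N ∧ ∀ t ∈ Icc a 1, m t = ∫ s in Ioc 0 t, D s) :
    ∃ h : ℝ → E, IntegrableOn h (Icc 0 1) ∧
      ∀ t ∈ Ioc (0 : ℝ) 1, m t = m 1 - ∫ s in Ioc t 1, h s := by
  set a : ℕ → ℝ := fun n => 1 / ((n : ℝ) + 1) with ha
  have ha_pos (n : ℕ) : 0 < a n := Nat.one_div_pos_of_nat
  have ha_anti : Antitone a := fun n k hnk => Nat.one_div_le_one_div hnk
  have ha_mem (n : ℕ) : a n ∈ Ioc (0 : ℝ) 1 :=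
    ⟨ha_pos n, (ha_anti (Nat.zero_le n)).trans (by norm_num [ha])⟩
  choose D hDint hDnorm hDrep using fun n => hD (a n) (ha_mem n)
  have hDsub (n : ℕ) {t : ℝ} (ht : t ∈ Icc (a n) 1) : ∫ s in Ioc t 1, D n s = m 1 - m t := by
    rw [hDrep n 1 ⟨(ha_mem n).2, le_rfl⟩, hDrep n t ht, eq_sub_iff_add_eq',
      integral_Ioc_add_integral_Ioc ((ha_pos n).le.trans ht.1) ht.2
        ((hDint n).mono_set Ioc_subset_Icc_self)]
  have hcons (n k : ℕ) (hnk : n ≤ k) : D n =ᵐ[volume.restrict (Ioc (a n) 1)] D k :=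
    ae_eq_restrict_Ioc_of_forall_integral_eq (ha_pos n).le
      ((hDint n).mono_set Ioc_subset_Icc_self) ((hDint k).mono_set Ioc_subset_Icc_self)
      fun t ht => by
        rw [← hDrep n t ⟨ht.1.le, ht.2.le⟩, ← hDrep k t ⟨(ha_anti hnk).trans ht.1.le, ht.2.le⟩]
  obtain ⟨h, hh⟩ := exists_forall_ae_eq_restrict (fun _ => measurableSet_Ioc) hcons
  have hsub (n : ℕ) : Ioc (a n) 1 ⊆ Icc 0 1 :=
    Ioc_subset_Icc_self.trans (Icc_subset_Icc_left (ha_pos n).le)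
  have hint : IntegrableOn h (Ioc 0 1) := by
    refine integrableOn_Ioc_of_intervalIntegral_norm_bounded_left (l := atTop) (I := N)
      (fun n => ((hDint n).mono_set (hsub n)).congr (hh n).symm)
      tendsto_one_div_add_atTop_nhds_zero_nat (Eventually.of_forall fun n => ?_)
    calc ∫ s in Ioc (a n) 1, ‖h s‖ = ∫ s in Ioc (a n) 1, ‖D n s‖ :=
          integral_congr_ae ((hh n).fun_comp norm)
      _ ≤ ∫ s in Icc 0 1, ‖D n s‖ := setIntegral_mono_set (hDint n).norm
          (Eventually.of_forall fun _ => norm_nonneg _) (Eventually.of_forall (hsub n))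
      _ ≤ N := hDnorm n
  refine ⟨h, (integrableOn_Icc_iff_integrableOn_Ioc).2 hint, fun t ht => ?_⟩
  obtain ⟨n, hn⟩ := exists_nat_one_div_lt ht.1
  rw [integral_congr_ae (ae_restrict_of_ae_restrict_of_subset (Ioc_subset_Ioc_left hn.le) (hh n)),
    hDsub n ⟨hn.le, ht.2⟩, sub_sub_cancel]

end Forward

/-- `g'` and `D` stand for the derivatives of `g` and of `m * g`. -/
def IsMultiplierAC1 (m : ℝ → ℂ) (N : ℝ) : Prop :=
  ∀ g g' : ℝ → ℂ, MemLp g' 1 mu01 →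
    (∀ t ∈ Icc (0 : ℝ) 1, g t = ∫ s in Ioc (0 : ℝ) t, g' s) →
    ∃ D : ℝ → ℂ, MemLp D 1 mu01 ∧
      (∀ t ∈ Icc (0 : ℝ) 1, (if t = 0 then 0 else m t * g t) = ∫ s in Ioc (0 : ℝ) t, D s) ∧
      eLpNorm D 1 mu01 ≤ ENNReal.ofReal N * eLpNorm g' 1 mu01

theorem IsMultiplierAC1.exists_density {m : ℝ → ℂ} {N : ℝ} (hm : IsMultiplierAC1 m N)
    (hN : 0 ≤ N) {a : ℝ} (ha : a ∈ Ioc (0 : ℝ) 1) :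
    ∃ D : ℝ → ℂ, IntegrableOn D (Icc 0 1) ∧ ∫ s in Icc 0 1, ‖D s‖ ≤ N ∧
      ∀ t ∈ Icc a 1, m t = ∫ s in Ioc 0 t, D s := by
  set g' : ℝ → ℂ := (Ioc 0 a).indicator fun _ => (a : ℂ)⁻¹
  have hg'int : IntegrableOn g' (Icc 0 1) :=
    (integrableOn_const isCompact_Icc.measure_lt_top.ne).indicator measurableSet_Ioc
  have hg'norm : eLpNorm g' 1 mu01 = 1 := by
    rw [eLpNorm_indicator_const measurableSet_Ioc one_ne_zero ENNReal.one_ne_top, mu01,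
      Measure.restrict_apply measurableSet_Ioc,
      inter_eq_left.2 (Ioc_subset_Icc_self.trans (Icc_subset_Icc_right ha.2)), Real.volume_Ioc,
      sub_zero, ENNReal.toReal_one, div_one, ENNReal.rpow_one, ← ofReal_norm,
      ← ENNReal.ofReal_mul (norm_nonneg _), norm_inv, Complex.norm_real,
      Real.norm_of_nonneg ha.1.le, inv_mul_cancel₀ ha.1.ne', ENNReal.ofReal_one]
  have hg'prim (t : ℝ) (ht : a ≤ t) : ∫ s in Ioc 0 t, g' s = 1 := by
    rw [setIntegral_indicator measurableSet_Ioc, inter_eq_right.2 (Ioc_subset_Ioc_right ht),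
      setIntegral_const, Real.volume_real_Ioc_of_le ha.1.le, sub_zero, Complex.real_smul,
      mul_inv_cancel₀ (by exact_mod_cast ha.1.ne')]
  obtain ⟨D, hD, hDrep, hDnorm⟩ := hm _ g' (memLp_one_iff_integrable.2 hg'int) fun _ _ => rfl
  have hDint : IntegrableOn D (Icc 0 1) := memLp_one_iff_integrable.1 hD
  refine ⟨D, hDint, ?_, fun t ht => ?_⟩
  · rwa [hg'norm, mul_one, eLpNorm_one_eq_ofReal_integral_norm (μ := mu01) hDint,
      ENNReal.ofReal_le_ofReal_iff hN] at hDnorm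
  · have := hDrep t ⟨ha.1.le.trans ht.1, ht.2⟩
    rwa [if_neg (ha.1.trans_le ht.1).ne', hg'prim t ht.1, mul_one] at this

theorem isMultiplierAC1_of_eq_add_integral {m h : ℝ → ℂ} {c : ℂ} (hh : IntegrableOn h (Icc 0 1))
    (hm : ∀ t ∈ Ioc (0 : ℝ) 1, m t = c + ∫ s in Ioc 0 t, h s) :
    IsMultiplierAC1 m (‖c‖ + 2 * ∫ s in Icc 0 1, ‖h s‖) := by
  intro g g' hg' hg
  have hg'i : IntegrableOn g' (Icc 0 1) := memLp_one_iff_integrable.1 hg'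
  set C := ∫ s in Icc (0 : ℝ) 1, ‖h s‖
  set B := ∫ s in Icc (0 : ℝ) 1, ‖g' s‖
  set G : ℝ → ℂ := fun s => ∫ x in Ioc 0 s, g' x
  set H : ℝ → ℂ := fun s => ∫ x in Ioc 0 s, h x
  set D : ℝ → ℂ := fun s => h s * G s + (c + H s) * g' s
  have hDi : IntegrableOn D (Icc 0 1) :=
    (hh.mul_continuousOn (continuousOn_integral_Ioc hg'i) isCompact_Icc).add
      (hg'i.continuousOn_mul (continuousOn_const.add (continuousOn_integral_Ioc hh)) isCompact_Icc)
  refine ⟨D, memLp_one_iff_integrable.2 hDi, fun t ht => ?_, ?_⟩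
  · rcases ht.1.eq_or_lt with rfl | ht0
    · simp
    have hsub : Icc 0 t ⊆ Icc (0 : ℝ) 1 := Icc_subset_Icc_right ht.2
    rw [if_neg ht0.ne', hm t ⟨ht0, ht.2⟩, hg t ht]
    exact add_integral_Ioc_mul_integral_Ioc c (hh.mono_set hsub) (hg'i.mono_set hsub)
  · have hpointwise : ∀ s ∈ Icc (0 : ℝ) 1, ‖D s‖ ≤ ‖h s‖ * B + (‖c‖ + C) * ‖g' s‖ :=
      fun s hs => calc
        ‖D s‖ ≤ ‖h s‖ * ‖G s‖ + (‖c‖ + ‖H s‖) * ‖g' s‖ := by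
          refine (norm_add_le _ _).trans ?_
          rw [norm_mul, norm_mul]
          gcongr
          exact norm_add_le _ _
        _ ≤ ‖h s‖ * B + (‖c‖ + C) * ‖g' s‖ := by
          gcongr
          exacts [norm_integral_Ioc_le hg'i hs.2, norm_integral_Ioc_le hh hs.2]
    have hbound : ∫ s in Icc 0 1, ‖D s‖ ≤ (‖c‖ + 2 * C) * B := calc
      ∫ s in Icc 0 1, ‖D s‖ ≤ ∫ s in Icc 0 1, (‖h s‖ * B + (‖c‖ + C) * ‖g' s‖) :=
        setIntegral_mono_on hDi.norm (hh.norm.mul_const B |>.add (hg'i.norm.const_mul _))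
          measurableSet_Icc hpointwise
      _ = (‖c‖ + 2 * C) * B := by
        rw [integral_add (hh.norm.mul_const B) (hg'i.norm.const_mul _), integral_mul_const,
          integral_const_mul]
        ring
    rw [eLpNorm_one_eq_ofReal_integral_norm (μ := mu01) hDi,
      eLpNorm_one_eq_ofReal_integral_norm (μ := mu01) hg'i, ← ENNReal.ofReal_mul (by positivity)]
    exact ENNReal.ofReal_le_ofReal hbound

theorem multiplier_AC1_iff_absolutelyContinuous_general
    (m : ℝ → ℂ) :
    (∃ N : ℝ, 0 ≤ N ∧ ∀ g g' : ℝ → ℂ, MemLp g' 1 mu01 →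
      (∀ t ∈ Set.Icc (0 : ℝ) 1, g t = ∫ s in Set.Ioc (0 : ℝ) t, g' s) →
      ∃ D : ℝ → ℂ, MemLp D 1 mu01 ∧
        (∀ t ∈ Set.Icc (0 : ℝ) 1,
          (if t = 0 then 0 else m t * g t) = ∫ s in Set.Ioc (0 : ℝ) t, D s) ∧
        eLpNorm D 1 mu01 ≤ ENNReal.ofReal N * eLpNorm g' 1 mu01) ↔
    (∃ h : ℝ → ℂ, IntegrableOn h (Set.Icc (0 : ℝ) 1) ∧
      ∀ t ∈ Set.Ioc (0 : ℝ) 1, m t = m 1 - ∫ s in Set.Ioc t 1, h s) := by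
  constructor
  · rintro ⟨N, hN, hmul⟩
    exact exists_integrableOn_eq_sub_integral_of_bounded_local_densities fun a ha =>
      IsMultiplierAC1.exists_density hmul hN ha
  · rintro ⟨h, hh, hm⟩
    refine ⟨_, by positivity,
      isMultiplierAC1_of_eq_add_integral (c := m 1 - ∫ s in Ioc 0 1, h s) hh fun t ht => ?_⟩
    rw [hm t ht, ← integral_Ioc_add_integral_Ioc ht.1.le ht.2 (hh.mono_set Ioc_subset_Icc_self)]
    ring

/-- multipliers of `AC_1`, Larsen.  Let `m` be continuous and
bounded on `(0,1]`.  Then `m` is a (bounded) multiplier of `AC_1` — i.e. there is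
`N ≥ 0` such that for every `g ∈ AC_1` the product `mg` (extended by
`(mg)(0) = 0`) lies in `AC_1` with `|||mg||| ≤ N |||g|||` — if and only if `m`
extends to an absolutely continuous function on `[0,1]`: there is `h ∈ L¹[0,1]`
with `m t = m 1 − ∫_t^1 h` for all `t ∈ (0,1]`. -/
theorem multiplier_AC1_iff_absolutelyContinuous
    (m : ℝ → ℂ)
    (hmc : ContinuousOn m (Set.Ioc (0 : ℝ) 1))
    (hmb : ∃ M : ℝ, ∀ t ∈ Set.Ioc (0 : ℝ) 1, ‖m t‖ ≤ M) :
    (∃ N : ℝ, 0 ≤ N ∧ ∀ g g' : ℝ → ℂ, MemLp g' 1 mu01 →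
      (∀ t ∈ Set.Icc (0 : ℝ) 1, g t = ∫ s in Set.Ioc (0 : ℝ) t, g' s) →
      ∃ D : ℝ → ℂ, MemLp D 1 mu01 ∧
        (∀ t ∈ Set.Icc (0 : ℝ) 1,
          (if t = 0 then 0 else m t * g t) = ∫ s in Set.Ioc (0 : ℝ) t, D s) ∧
        eLpNorm D 1 mu01 ≤ ENNReal.ofReal N * eLpNorm g' 1 mu01) ↔
    (∃ h : ℝ → ℂ, IntegrableOn h (Set.Icc (0 : ℝ) 1) ∧
      ∀ t ∈ Set.Ioc (0 : ℝ) 1, m t = m 1 - ∫ s in Set.Ioc t 1, h s) :=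
  multiplier_AC1_iff_absolutelyContinuous_general m
end
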